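/- arXiv:1205.5989 — 12 statements merged into one kernel-verified Lean document; each statement's English description precedes it below -/
import Mathlib

section
/- The free vector space with basis {A_m : m ∈ ℤ} ∪ {G_l : l ∈ ℕ⁺}, equipped with the antisymmetric bilinear bracket defined by [A_l, A_m] = 2 G_{l−m} for l > m, [G_l, A_m] = A_{m+l} − A_{m−l}, and [G_l, G_m] = 0 (extending with G_{−m} = −G_m and G_0 = 0), satisfies the Jacobi identity and hence is a Lie algebra (the Onsager algebra). -/
/-!
The bracket is bilinear, so the Jacobiator is trilinear and invariant under cyclic rotation;
it therefore suffices to check the Jacobi identity on triples of basis vectors, and up to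
rotation only the types `AAA`, `AAG`, `AGG`, `GGG` occur. Extending `G_n` to all `n ∈ ℤ` by
`G_0 = 0`, `G_{-n} = -G_n` makes the rules `[A_l, A_m] = 2 G_{l-m}` and
`[G_n, A_m] = A_{m+n} - A_{m-n}` hold for all integer indices, and each of the four cases
becomes a cancellation of shifted `A`'s and `G`'s.
-/

/-- Index type for the basis of the Onsager algebra: `Sum.inl m ↦ A_m` (`m ∈ ℤ`) and
`Sum.inr l ↦ G_l` (`l ∈ ℕ₊`, i.e. positive integers). -/
abbrev OnsIdx : Type := ℤ ⊕ {l : ℤ // 0 < l}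

variable (k : Type) [Field k] [CharZero k]

/-- The basis vector `A_m` in the free vector space on `OnsIdx`. -/
noncomputable def Aelt (m : ℤ) : OnsIdx →₀ k := Finsupp.single (Sum.inl m) 1

/-- The element `G_n` for arbitrary `n ∈ ℤ`, with the conventions `G_0 = 0` and
`G_{-n} = -G_n`. -/
noncomputable def Gelt (n : ℤ) : OnsIdx →₀ k :=
  if h : 0 < n then Finsupp.single (Sum.inr ⟨n, h⟩) 1
  else if h' : 0 < -n then -Finsupp.single (Sum.inr ⟨-n, h'⟩) 1
  else 0

/-- The bracket on basis elements: `[A_l, A_m] = 2 G_{l-m}`, `[G_l, A_m] = A_{m+l} - A_{m-l}`,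
`[A_m, G_l] = -(A_{m+l} - A_{m-l})` and `[G_l, G_m] = 0`. -/
noncomputable def brB : OnsIdx → OnsIdx → (OnsIdx →₀ k)
  | Sum.inl l, Sum.inl m => (2 : k) • Gelt k (l - m)
  | Sum.inr l, Sum.inl m => Aelt k (m + l.1) - Aelt k (m - l.1)
  | Sum.inl m, Sum.inr l => -(Aelt k (m + l.1) - Aelt k (m - l.1))
  | Sum.inr _, Sum.inr _ => 0

/-- The bilinear extension of the bracket to the whole free vector space. -/
noncomputable def onsBracket (x y : OnsIdx →₀ k) : OnsIdx →₀ k :=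
  x.sum fun i a => y.sum fun j b => (a * b) • brB k i j

section Jacobiator

variable {R M ι : Type*} [CommSemiring R] [AddCommMonoid M] [Module R M]

def jacobiator (B : M →ₗ[R] M →ₗ[R] M) (x y z : M) : M :=
  B x (B y z) + B y (B z x) + B z (B x y)

lemma jacobiator_rotate (B : M →ₗ[R] M →ₗ[R] M) (x y z : M) :
    jacobiator B x y z = jacobiator B y z x := by
  unfold jacobiator; abel

lemma jacobiator_eq_zero_of_basis_left (b : Module.Basis ι R M) (B : M →ₗ[R] M →ₗ[R] M)
    {y z : M} (h : ∀ i, jacobiator B (b i) y z = 0) (x : M) : jacobiator B x y z = 0 := by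
  let J : M →ₗ[R] M := B.flip (B y z) + B y ∘ₗ B z + B z ∘ₗ B.flip y
  have hJ : J = 0 := b.ext h
  exact LinearMap.congr_fun hJ x

lemma jacobiator_eq_zero_of_basis (b : Module.Basis ι R M) (B : M →ₗ[R] M →ₗ[R] M)
    (h : ∀ i j l, jacobiator B (b i) (b j) (b l) = 0) (x y z : M) :
    jacobiator B x y z = 0 := by
  have h₁ (j l : ι) (x : M) : jacobiator B x (b j) (b l) = 0 :=
    jacobiator_eq_zero_of_basis_left b B (h · j l) x
  have h₂ (l : ι) (x y : M) : jacobiator B x y (b l) = 0 := by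
    rw [jacobiator_rotate]
    refine jacobiator_eq_zero_of_basis_left b B (fun j => ?_) y
    rw [← jacobiator_rotate]
    exact h₁ _ _ _
  rw [← jacobiator_rotate]
  refine jacobiator_eq_zero_of_basis_left b B (fun l => ?_) z
  rw [jacobiator_rotate]
  exact h₂ _ _ _

end Jacobiator

section OnsagerBracket

variable {K : Type} [Field K]

variable (K) in
noncomputable def onsBracketLin :
    (OnsIdx →₀ K) →ₗ[K] (OnsIdx →₀ K) →ₗ[K] (OnsIdx →₀ K) :=
  Finsupp.lsum K fun i => LinearMap.toSpanSingleton K _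
    (Finsupp.lsum K fun j => LinearMap.toSpanSingleton K _ (brB K i j))

lemma onsBracket_eq_onsBracketLin (x y : OnsIdx →₀ K) :
    onsBracket K x y = onsBracketLin K x y := by
  simp only [onsBracket, onsBracketLin, Finsupp.lsum_apply, LinearMap.finsupp_sum_apply,
    LinearMap.smul_apply, LinearMap.toSpanSingleton_apply, Finsupp.smul_sum, smul_smul]

lemma onsBracketLin_single_single (i j : OnsIdx) :
    onsBracketLin K (Finsupp.single i 1) (Finsupp.single j 1) = brB K i j := by
  simp [onsBracketLin]

lemma Gelt_zero : Gelt K 0 = 0 := by simp [Gelt]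

lemma Gelt_of_pos {n : ℤ} (h : 0 < n) : Gelt K n = Finsupp.single (Sum.inr ⟨n, h⟩) 1 := by
  simp [Gelt, h]

lemma Gelt_neg (n : ℤ) : Gelt K (-n) = -Gelt K n := by
  rcases lt_trichotomy 0 n with h | rfl | h
  · simp [Gelt, h, h.not_gt]
  · simp [Gelt_zero]
  · simp [Gelt, h, h.not_gt]

lemma brB_swap (i j : OnsIdx) : brB K i j = -brB K j i := by
  rcases i with l | _ <;> rcases j with m | _
  · simp only [brB, ← smul_neg, ← Gelt_neg, neg_sub]
  all_goals simp [brB]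

lemma onsBracketLin_swap (x y : OnsIdx →₀ K) : onsBracketLin K x y = -onsBracketLin K y x := by
  have h : onsBracketLin K + (onsBracketLin K).flip = 0 := by
    ext i j
    simp [onsBracketLin_single_single, brB_swap i j]
  exact eq_neg_of_add_eq_zero_left (LinearMap.congr_fun (LinearMap.congr_fun h x) y)

lemma onsBracketLin_self [CharZero K] (x : OnsIdx →₀ K) : onsBracketLin K x x = 0 :=
  self_eq_neg.mp (onsBracketLin_swap x x)

lemma onsBracketLin_Aelt_Aelt (l m : ℤ) :
    onsBracketLin K (Aelt K l) (Aelt K m) = (2 : K) • Gelt K (l - m) :=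
  onsBracketLin_single_single (Sum.inl l) (Sum.inl m)

lemma onsBracketLin_Gelt_Aelt (n m : ℤ) :
    onsBracketLin K (Gelt K n) (Aelt K m) = Aelt K (m + n) - Aelt K (m - n) := by
  have hpos : ∀ n (h : 0 < n),
      onsBracketLin K (Gelt K n) (Aelt K m) = Aelt K (m + n) - Aelt K (m - n) := fun n h => by
    rw [Gelt_of_pos h]
    exact onsBracketLin_single_single (Sum.inr ⟨n, h⟩) (Sum.inl m)
  rcases lt_trichotomy 0 n with h | rfl | h
  · exact hpos n h
  · simp [Gelt_zero]
  · rw [← neg_neg n, Gelt_neg, map_neg, LinearMap.neg_apply, hpos (-n) (by omega), neg_neg,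
      neg_sub, sub_neg_eq_add, ← sub_eq_add_neg]

lemma onsBracketLin_Aelt_Gelt (m n : ℤ) :
    onsBracketLin K (Aelt K m) (Gelt K n) = Aelt K (m - n) - Aelt K (m + n) := by
  rw [onsBracketLin_swap, onsBracketLin_Gelt_Aelt, neg_sub]

lemma onsBracketLin_Gelt_Gelt (n m : ℤ) : onsBracketLin K (Gelt K n) (Gelt K m) = 0 := by
  have hG : ∀ p q : {l : ℤ // 0 < l},
      onsBracketLin K (Finsupp.single (Sum.inr p) 1) (Finsupp.single (Sum.inr q) 1) = 0 :=
    fun p q => onsBracketLin_single_single (Sum.inr p) (Sum.inr q)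
  unfold Gelt
  split_ifs <;> simp [hG]

lemma jacobiator_Aelt_Aelt_Aelt (l m n : ℤ) :
    jacobiator (onsBracketLin K) (Aelt K l) (Aelt K m) (Aelt K n) = 0 := by
  simp only [jacobiator, onsBracketLin_Aelt_Aelt, map_smul, onsBracketLin_Aelt_Gelt]
  ring_nf
  module

lemma jacobiator_Aelt_Aelt_Gelt (l m n : ℤ) :
    jacobiator (onsBracketLin K) (Aelt K l) (Aelt K m) (Gelt K n) = 0 := by
  simp only [jacobiator, onsBracketLin_Aelt_Gelt, onsBracketLin_Gelt_Aelt, onsBracketLin_Aelt_Aelt,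
    map_sub, map_smul, onsBracketLin_Gelt_Gelt]
  rw [show m - (l + n) = -(l - (m - n)) by ring, Gelt_neg,
    show m - (l - n) = -(l - (m + n)) by ring, Gelt_neg]
  module

lemma jacobiator_Aelt_Gelt_Gelt (l m n : ℤ) :
    jacobiator (onsBracketLin K) (Aelt K l) (Gelt K m) (Gelt K n) = 0 := by
  simp only [jacobiator, onsBracketLin_Gelt_Gelt, onsBracketLin_Gelt_Aelt, onsBracketLin_Aelt_Gelt,
    map_sub, map_zero]
  ring_nf
  module

lemma jacobiator_Gelt_Gelt_Gelt (l m n : ℤ) :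
    jacobiator (onsBracketLin K) (Gelt K l) (Gelt K m) (Gelt K n) = 0 := by
  simp [jacobiator, onsBracketLin_Gelt_Gelt]

lemma jacobiator_onsBracketLin_basisSingleOne (i j l : OnsIdx) :
    jacobiator (onsBracketLin K) (Finsupp.basisSingleOne i) (Finsupp.basisSingleOne j)
      (Finsupp.basisSingleOne l) = 0 := by
  have hA : ∀ m, (Finsupp.single (Sum.inl m) 1 : OnsIdx →₀ K) = Aelt K m := fun _ => rfl
  have hG : ∀ p : {l : ℤ // 0 < l}, (Finsupp.single (Sum.inr p) 1 : OnsIdx →₀ K) = Gelt K p.1 :=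
    fun p => (Gelt_of_pos p.2).symm
  simp only [Finsupp.coe_basisSingleOne]
  rcases i with _ | _ <;> rcases j with _ | _ <;> rcases l with _ | _ <;>
    simp only [hA, hG]
  · exact jacobiator_Aelt_Aelt_Aelt _ _ _
  · exact jacobiator_Aelt_Aelt_Gelt _ _ _
  · rw [← jacobiator_rotate]; exact jacobiator_Aelt_Aelt_Gelt _ _ _
  · exact jacobiator_Aelt_Gelt_Gelt _ _ _
  · rw [jacobiator_rotate]; exact jacobiator_Aelt_Aelt_Gelt _ _ _
  · rw [jacobiator_rotate]; exact jacobiator_Aelt_Gelt_Gelt _ _ _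
  · rw [← jacobiator_rotate]; exact jacobiator_Aelt_Gelt_Gelt _ _ _
  · exact jacobiator_Gelt_Gelt_Gelt _ _ _

lemma jacobiator_onsBracketLin (x y z : OnsIdx →₀ K) :
    jacobiator (onsBracketLin K) x y z = 0 := by
  refine jacobiator_eq_zero_of_basis Finsupp.basisSingleOne _ (fun i j l => ?_) x y z
  exact jacobiator_onsBracketLin_basisSingleOne i j l

end OnsagerBracket

/-- The antisymmetric bilinear bracket defined by Onsager's relations on the free vector
space with basis `{A_m : m ∈ ℤ} ∪ {G_l : l ∈ ℕ₊}` is alternating and satisfies the Jacobi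
identity; hence the Onsager algebra is a Lie algebra. -/
theorem stmt_0 :
    (∀ x : OnsIdx →₀ k, onsBracket k x x = 0) ∧
    (∀ x y z : OnsIdx →₀ k,
      onsBracket k x (onsBracket k y z) + onsBracket k y (onsBracket k z x) +
        onsBracket k z (onsBracket k x y) = 0) := by
  simp only [onsBracket_eq_onsBracketLin]
  exact ⟨onsBracketLin_self, jacobiator_onsBracketLin⟩
end

section
/- In a Lie algebra L over a field of characteristic zero, let A_0, A_1 ∈ L, set G_1 = (1/2)[A_1, A_0], and define A_{m+1} = A_{m−1} + [G_1, A_m] for all m ∈ ℤ. Then the equality of commutators [A_{−1}, A_0] = [A_0, A_1] = [A_1, A_2] holds if and only if A_0 and A_1 satisfy the Dolan–Grady relations [A_0,[A_0,[A_0,A_1]]] = 4[A_0,A_1] and [A_1,[A_1,[A_1,A_0]]] = 4[A_1,A_0]. -/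
/-- In a Lie algebra `L` over a field of characteristic zero, with `G₁ = (1/2)[A₁,A₀]`,
`A₂ = A₀ + [G₁,A₁]` and `A₋₁ = A₁ - [G₁,A₀]`, the equalities
`[A₋₁,A₀] = [A₀,A₁] = [A₁,A₂]` hold if and only if `A₀, A₁` satisfy the
Dolan–Grady relations. -/
theorem stmt_1 {k : Type*} [Field k] [CharZero k]
    {L : Type*} [LieRing L] [LieAlgebra k L] (A₀ A₁ : L)
    (G₁ A₂ Am₁ : L)
    (hG₁ : G₁ = (2 : k)⁻¹ • ⁅A₁, A₀⁆)
    (hA₂ : A₂ = A₀ + ⁅G₁, A₁⁆)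
    (hAm₁ : Am₁ = A₁ - ⁅G₁, A₀⁆) :
    (⁅Am₁, A₀⁆ = ⁅A₀, A₁⁆ ∧ ⁅A₀, A₁⁆ = ⁅A₁, A₂⁆) ↔
      (⁅A₀, ⁅A₀, ⁅A₀, A₁⁆⁆⁆ = (4 : k) • ⁅A₀, A₁⁆ ∧
        ⁅A₁, ⁅A₁, ⁅A₁, A₀⁆⁆⁆ = (4 : k) • ⁅A₁, A₀⁆) := by
  subst hG₁ hA₂ hAm₁
  have h2 : (2:k) ≠ 0 := two_ne_zero
  apply and_congr
  · rw [← sub_eq_zero, ← sub_eq_zero (b := (4:k) • ⁅A₀, A₁⁆)]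
    constructor
    · intro h
      have h' := congrArg (fun z => (2:k) • z) h
      simp only [smul_zero] at h'
      rw [← h']
      simp only [lie_lie, sub_lie, lie_sub, add_lie, lie_add, smul_lie, lie_smul, lie_neg, neg_lie, lie_self, lie_zero, zero_lie, ← lie_skew A₀ A₁]
      module
    · intro h
      have h' := congrArg (fun z => (2:k)⁻¹ • z) h
      simp only [smul_zero] at h'
      rw [← h']
      simp only [lie_lie, sub_lie, lie_sub, add_lie, lie_add, smul_lie, lie_smul, lie_neg, neg_lie, lie_self, lie_zero, zero_lie, ← lie_skew A₀ A₁]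
      match_scalars <;> field_simp <;> ring
  · rw [← sub_eq_zero, ← sub_eq_zero (b := (4:k) • ⁅A₁, A₀⁆)]
    constructor
    · intro h
      have h' := congrArg (fun z => (2:k) • z) h
      simp only [smul_zero] at h'
      rw [← h']
      simp only [lie_lie, sub_lie, lie_sub, add_lie, lie_add, smul_lie, lie_smul, lie_neg, neg_lie, lie_self, lie_zero, zero_lie, ← lie_skew A₀ A₁]
      module
    · intro h
      have h' := congrArg (fun z => (2:k)⁻¹ • z) h
      simp only [smul_zero] at h'
      rw [← h']
      simp only [lie_lie, sub_lie, lie_sub, add_lie, lie_add, smul_lie, lie_smul, lie_neg, neg_lie, lie_self, lie_zero, zero_lie, ← lie_skew A₀ A₁]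
      match_scalars <;> field_simp <;> ring
end

section
/- In a Lie algebra L over a field of characteristic zero, if A_0 and A_1 satisfy the Dolan–Grady relations [A_0,[A_0,[A_0,A_1]]] = 4[A_0,A_1] and [A_1,[A_1,[A_1,A_0]]] = 4[A_1,A_0], and one defines G_1 = (1/2)[A_1,A_0], A_2 = A_0 + [G_1,A_1], A_3 = A_1 + [G_1,A_2], A_{−1} = A_1 − [G_1,A_0], A_{−2} = A_0 − [G_1,A_{−1}], then [A_{−2},A_0] = [A_{−1},A_1] = [A_0,A_2] = [A_1,A_3]. -/
/-- If `A₀, A₁` satisfy the Dolan–Grady relations, and `A₂, A₃, A₋₁, A₋₂` are defined by the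
recursion `G₁ = (1/2)[A₁,A₀]`, `A_{m+1} = A_{m-1} + [G₁, A_m]`, then
`[A₋₂,A₀] = [A₋₁,A₁] = [A₀,A₂] = [A₁,A₃]`. -/
theorem stmt_2 {k : Type*} [Field k] [CharZero k]
    {L : Type*} [LieRing L] [LieAlgebra k L] (A₀ A₁ : L)
    (hDG1 : ⁅A₀, ⁅A₀, ⁅A₀, A₁⁆⁆⁆ = (4 : k) • ⁅A₀, A₁⁆)
    (hDG2 : ⁅A₁, ⁅A₁, ⁅A₁, A₀⁆⁆⁆ = (4 : k) • ⁅A₁, A₀⁆)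
    (G₁ A₂ A₃ Am₁ Am₂ : L)
    (hG₁ : G₁ = (2 : k)⁻¹ • ⁅A₁, A₀⁆)
    (hA₂ : A₂ = A₀ + ⁅G₁, A₁⁆)
    (hA₃ : A₃ = A₁ + ⁅G₁, A₂⁆)
    (hAm₁ : Am₁ = A₁ - ⁅G₁, A₀⁆)
    (hAm₂ : Am₂ = A₀ - ⁅G₁, Am₁⁆) :
    ⁅Am₂, A₀⁆ = ⁅Am₁, A₁⁆ ∧ ⁅Am₁, A₁⁆ = ⁅A₀, A₂⁆ ∧ ⁅A₀, A₂⁆ = ⁅A₁, A₃⁆ := by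
  subst hG₁ hA₂ hA₃ hAm₁ hAm₂
  set c := ⁅A₁, A₀⁆ with hc
  have hc' : ⁅A₀, A₁⁆ = -c := neg_eq_iff_eq_neg.mp (lie_skew A₁ A₀)
  have hDG1' : ⁅A₀, ⁅A₀, c⁆⁆ = (4 : k) • c := by
    have h := hDG1
    rw [hc', lie_neg, lie_neg, smul_neg, neg_inj] at h
    exact h
  have hDG2' : ⁅A₁, ⁅A₁, c⁆⁆ = (4 : k) • c := hDG2
  have hpq : ⁅A₀, ⁅A₁, c⁆⁆ = ⁅A₁, ⁅A₀, c⁆⁆ := by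
    rw [leibniz_lie A₀ A₁ c, hc', neg_lie, lie_self, neg_zero, zero_add]
  have hcp : ⁅A₀, ⁅c, ⁅A₀, c⁆⁆⁆ = 0 := by
    rw [leibniz_lie, hDG1']; simp
  have hcq : ⁅A₁, ⁅c, ⁅A₁, c⁆⁆⁆ = 0 := by
    rw [leibniz_lie, hDG2']; simp
  have hca0 : ⁅c, A₀⁆ = -⁅A₀, c⁆ := neg_eq_iff_eq_neg.mp (lie_skew A₀ c)
  have hca1 : ⁅c, A₁⁆ = -⁅A₁, c⁆ := neg_eq_iff_eq_neg.mp (lie_skew A₁ c)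
  have h1 : ⁅⁅A₁, c⁆, A₀⁆ = -⁅A₁, ⁅A₀, c⁆⁆ := by
    rw [← hpq]; exact neg_eq_iff_eq_neg.mp (lie_skew A₀ ⁅A₁, c⁆)
  have h2 : ⁅⁅c, ⁅A₀, c⁆⁆, A₀⁆ = 0 := by
    rw [← neg_eq_zero, lie_skew, hcp]
  have h3 : ⁅⁅A₀, c⁆, A₁⁆ = -⁅A₁, ⁅A₀, c⁆⁆ := neg_eq_iff_eq_neg.mp (lie_skew A₁ ⁅A₀, c⁆)
  refine ⟨?_, ?_, ?_⟩ <;>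
  simp only [lie_add, add_lie, lie_sub, sub_lie, lie_smul, smul_lie, lie_self, lie_neg,
      neg_lie, smul_neg, neg_neg, smul_zero, zero_add, add_zero, zero_sub, sub_zero,
      smul_smul, hca0, hca1, hpq, hcp, hcq, h1, h2, h3]
  all_goals module
end

section
/- In a Lie algebra L over a field of characteristic zero with A_0, A_1 satisfying the Dolan–Grady relations and A_m defined recursively by G_1 = (1/2)[A_1,A_0], A_{m+1} = A_{m−1} + [G_1, A_m], one has [A_{−3},A_0] = [A_{−2},A_1] = [A_{−1},A_2] = [A_0,A_3] = [A_1,A_4]. -/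
private lemma dg_core {k : Type*} [Field k] [CharZero k]
    {L : Type*} [LieRing L] [LieAlgebra k L]
    (a b g : L) (hg : (2 : k) • g = ⁅b, a⁆)
    (h1 : ⁅a, ⁅a, ⁅a, b⁆⁆⁆ = (4 : k) • ⁅a, b⁆)
    (h2 : ⁅b, ⁅b, ⁅b, a⁆⁆⁆ = (4 : k) • ⁅b, a⁆) :
    ⁅b - ⁅g, a⁆, a + ⁅g, b⁆⁆ = ⁅a, b + ⁅g, a⁆ + ⁅g, ⁅g, b⁆⁆⁆ ∧
      ⁅a, b + ⁅g, a⁆ + ⁅g, ⁅g, b⁆⁆⁆ =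
        ⁅b, a + ⁅g, b⁆ + ⁅g, b⁆ + ⁅g, ⁅g, a⁆⁆ + ⁅g, ⁅g, ⁅g, b⁆⁆⁆⁆ := by
  have hba : ⁅b, a⁆ = (2 : k) • g := hg.symm
  have hab : ⁅a, b⁆ = (-2 : k) • g := by rw [← lie_skew, hba]; module
  set p := ⁅g, a⁆ with hp
  set q := ⁅g, b⁆ with hq
  have hag : ⁅a, g⁆ = -p := (lie_skew a g).symm
  have hbg : ⁅b, g⁆ = -q := (lie_skew b g).symm
  -- [a,p] = -4g
  have e1 : ⁅a, ⁅a, ⁅a, b⁆⁆⁆ = (2 : k) • ⁅a, p⁆ := by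
    rw [hab, lie_smul, hag, lie_smul, lie_neg]; module
  have hap : ⁅a, p⁆ = (-4 : k) • g := by
    have h' : (2 : k) • ⁅a, p⁆ = (2 : k) • ((-4 : k) • g) := by
      rw [← e1, h1, hab]; module
    exact smul_right_injective L (two_ne_zero (α := k)) h' 
  -- [b,q] = -4g
  have e2 : ⁅b, ⁅b, ⁅b, a⁆⁆⁆ = (-2 : k) • ⁅b, q⁆ := by
    rw [hba, lie_smul, hbg, lie_smul, lie_neg]; module
  have hbq : ⁅b, q⁆ = (-4 : k) • g := by
    have h' : (-2 : k) • ⁅b, q⁆ = (-2 : k) • ((-4 : k) • g) := by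
      rw [← e2, h2, hba]; module
    exact smul_right_injective L (by norm_num : (-2 : k) ≠ 0) h' 
  -- c := [a,q] = [b,p]
  have hh : ⁅b, p⁆ = ⁅a, q⁆ := by
    rw [hq, leibniz_lie a g b, hag, hab, lie_smul, lie_self, smul_zero, add_zero,
      neg_lie, ← lie_skew p b, neg_neg]
  set c := ⁅a, q⁆ with hc
  set u := ⁅g, p⁆ with hu
  set v := ⁅g, q⁆ with hv
  set s := ⁅q, p⁆ with hs
  have hpq : ⁅p, q⁆ = -s := (lie_skew p q).symm
  have hpa : ⁅p, a⁆ = (4 : k) • g := by rw [← lie_skew, hap]; module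
  have hqb : ⁅q, b⁆ = (4 : k) • g := by rw [← lie_skew, hbq]; module
  have hah : ⁅a, c⁆ = (-2 : k) • u + (4 : k) • q := by
    rw [← hh, leibniz_lie, hab, hap, smul_lie, lie_smul, hbg]; module
  have hbh : ⁅b, c⁆ = (2 : k) • v + (4 : k) • p := by
    rw [hc, leibniz_lie, hba, hbq, smul_lie, lie_smul, hag]; module
  have hbu : ⁅b, u⁆ = -s + ⁅g, c⁆ := by
    rw [hu, leibniz_lie, hbg, hh, neg_lie]
  have hav : ⁅a, v⁆ = s + ⁅g, c⁆ := by
    rw [hv, leibniz_lie, hag, neg_lie, hpq, neg_neg, ← hc]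
  -- [g,c] = 0
  have egc : (2 : k) • ⁅g, c⁆ = (-4 : k) • ⁅g, c⁆ := by
    rw [← smul_lie, hg, lie_lie, hah, hbh, lie_add, lie_add, lie_smul, lie_smul,
      lie_smul, lie_smul, hbu, hav, hbq, hap]
    module
  have hgc : ⁅g, c⁆ = 0 := by
    have h6 : (6 : k) • ⁅g, c⁆ = 0 := by
      have : (2 : k) • ⁅g, c⁆ - (-4 : k) • ⁅g, c⁆ = 0 := by rw [egc, sub_self]
      calc (6 : k) • ⁅g, c⁆ = (2 : k) • ⁅g, c⁆ - (-4 : k) • ⁅g, c⁆ := by module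
        _ = 0 := this
    exact (smul_eq_zero.mp h6).resolve_left (by norm_num)
  have hbu' : ⁅b, u⁆ = -s := by rw [hbu, hgc, add_zero]
  have hav' : ⁅a, v⁆ = s := by rw [hav, hgc, add_zero]
  have hbv : ⁅b, v⁆ = 0 := by
    rw [hv, leibniz_lie, hbg, hbq, neg_lie, lie_self, neg_zero, zero_add,
      lie_smul, lie_self, smul_zero]
  have hqc : ⁅q, c⁆ = (2 : k) • ⁅g, v⁆ + (4 : k) • u := by
    rw [hq, lie_lie, hbh, hgc, lie_zero, sub_zero, lie_add, lie_smul, lie_smul,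
      ← hu]
  have hbgv : ⁅b, ⁅g, v⁆⁆ = -⁅q, v⁆ := by
    rw [leibniz_lie, hbg, hbv, lie_zero, add_zero, neg_lie]
  have hqv : ⁅q, v⁆ = (-2 : k) • s := by
    have t : (2 : k) • ⁅q, v⁆ = (2 : k) • (-⁅q, v⁆) + (-8 : k) • s := by
      have e2v : (2 : k) • v = ⁅b, c⁆ - (4 : k) • p := by rw [hbh]; module
      calc (2 : k) • ⁅q, v⁆ = ⁅q, (2 : k) • v⁆ := (lie_smul _ _ _).symm
        _ = ⁅q, ⁅b, c⁆⁆ - (4 : k) • s := by rw [e2v, lie_sub, lie_smul, ← hs]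
        _ = (2 : k) • (-⁅q, v⁆) + (-8 : k) • s := by
            rw [leibniz_lie, hqb, smul_lie, hgc, smul_zero, hqc, lie_add,
              lie_smul, lie_smul, hbgv, hbu']
            module
    have h' : (4 : k) • ⁅q, v⁆ = (4 : k) • ((-2 : k) • s) := by
      calc (4 : k) • ⁅q, v⁆ = (2 : k) • ⁅q, v⁆ - (2 : k) • (-⁅q, v⁆) := by module
        _ = (4 : k) • ((-2 : k) • s) := by rw [t]; module
    exact smul_right_injective L (by norm_num : (4 : k) ≠ 0) h' 
  have hbgv' : ⁅b, ⁅g, v⁆⁆ = (2 : k) • s := by rw [hbgv, hqv]; module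
  constructor
  · simp only [sub_lie, lie_add]
    rw [hba, hbq, hpa, hpq, hab, hap, hav']
    module
  · simp only [lie_add]
    rw [hab, hap, hav', hba, hbq, hbu', hbgv']
    module

/-- If `A₀, A₁` satisfy the Dolan–Grady relations and `A_m` is defined recursively by
`G₁ = (1/2)[A₁,A₀]`, `A_{m+1} = A_{m-1} + [G₁, A_m]` for all `m ∈ ℤ`, then
`[A₋₃,A₀] = [A₋₂,A₁] = [A₋₁,A₂] = [A₀,A₃] = [A₁,A₄]`. -/
theorem stmt_3 {k : Type*} [Field k] [CharZero k]
    {L : Type*} [LieRing L] [LieAlgebra k L] (A : ℤ → L) (G₁ : L)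
    (hG₁ : G₁ = (2 : k)⁻¹ • ⁅A 1, A 0⁆)
    (hrec : ∀ m : ℤ, A (m + 1) = A (m - 1) + ⁅G₁, A m⁆)
    (hDG1 : ⁅A 0, ⁅A 0, ⁅A 0, A 1⁆⁆⁆ = (4 : k) • ⁅A 0, A 1⁆)
    (hDG2 : ⁅A 1, ⁅A 1, ⁅A 1, A 0⁆⁆⁆ = (4 : k) • ⁅A 1, A 0⁆) :
    ⁅A (-3), A 0⁆ = ⁅A (-2), A 1⁆ ∧ ⁅A (-2), A 1⁆ = ⁅A (-1), A 2⁆ ∧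
      ⁅A (-1), A 2⁆ = ⁅A 0, A 3⁆ ∧ ⁅A 0, A 3⁆ = ⁅A 1, A 4⁆ := by
  have hg2 : (2 : k) • G₁ = ⁅A 1, A 0⁆ := by
    rw [hG₁, smul_smul, mul_inv_cancel₀ (two_ne_zero (α := k)), one_smul]
  have r1 : A 2 = A 0 + ⁅G₁, A 1⁆ := by have h := hrec 1; norm_num at h; exact h
  have r3 : A 3 = A 1 + ⁅G₁, A 2⁆ := by have h := hrec 2; norm_num at h; exact h
  have r4 : A 4 = A 2 + ⁅G₁, A 3⁆ := by have h := hrec 3; norm_num at h; exact h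
  have rm1 : A (-1) = A 1 - ⁅G₁, A 0⁆ := by
    have h := hrec 0; norm_num at h
    exact eq_sub_of_add_eq h.symm
  have rm2 : A (-2) = A 0 - ⁅G₁, A (-1)⁆ := by
    have h := hrec (-1); norm_num at h
    exact eq_sub_of_add_eq h.symm
  have rm3 : A (-3) = A (-1) - ⁅G₁, A (-2)⁆ := by
    have h := hrec (-2); norm_num at h
    exact eq_sub_of_add_eq h.symm
  obtain ⟨pos1, pos2⟩ := dg_core (A 0) (A 1) G₁ hg2 hDG1 hDG2
  obtain ⟨neg1, neg2⟩ := dg_core (A 1) (A 0) (-G₁)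
    (by rw [smul_neg, hg2]; exact lie_skew _ _) hDG2 hDG1
  have EA3 : A 3 = A 1 + ⁅G₁, A 0⁆ + ⁅G₁, ⁅G₁, A 1⁆⁆ := by
    rw [r3, r1, lie_add, add_assoc]
  have EA4 : A 4 = A 0 + ⁅G₁, A 1⁆ + ⁅G₁, A 1⁆ + ⁅G₁, ⁅G₁, A 0⁆⁆ +
      ⁅G₁, ⁅G₁, ⁅G₁, A 1⁆⁆⁆ := by
    rw [r4, EA3, r1]; simp only [lie_add]; abel
  have EA2' : A 2 = A 0 - ⁅-G₁, A 1⁆ := by rw [r1, neg_lie, sub_neg_eq_add]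
  have EAm1' : A (-1) = A 1 + ⁅-G₁, A 0⁆ := by rw [rm1, neg_lie, ← sub_eq_add_neg]
  have EAm2 : A (-2) = A 0 + ⁅-G₁, A 1⁆ + ⁅-G₁, ⁅-G₁, A 0⁆⁆ := by
    rw [rm2, rm1]; simp only [lie_sub, neg_lie, lie_neg, neg_neg]; abel
  have EAm3 : A (-3) = A 1 + ⁅-G₁, A 0⁆ + ⁅-G₁, A 0⁆ + ⁅-G₁, ⁅-G₁, A 1⁆⁆ +
      ⁅-G₁, ⁅-G₁, ⁅-G₁, A 0⁆⁆⁆ := by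
    rw [rm3, EAm2, rm1]; simp only [lie_sub, lie_add, neg_lie, lie_neg, neg_neg]; abel
  refine ⟨?_, ?_, ?_, ?_⟩
  · calc ⁅A (-3), A 0⁆ = -⁅A 0, A (-3)⁆ := (lie_skew _ _).symm
      _ = -⁅A 1, A (-2)⁆ := by
          rw [EAm2, EAm3]; exact congrArg Neg.neg neg2.symm
      _ = ⁅A (-2), A 1⁆ := lie_skew _ _
  · calc ⁅A (-2), A 1⁆ = -⁅A 1, A (-2)⁆ := (lie_skew _ _).symm
      _ = -⁅A 2, A (-1)⁆ := by
          rw [EAm2, EA2', EAm1']; exact congrArg Neg.neg neg1.symm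
      _ = ⁅A (-1), A 2⁆ := lie_skew _ _
  · rw [rm1, r1, EA3]; exact pos1
  · rw [EA3, EA4]; exact pos2
end

section
/- The Onsager algebra O (with basis {A_m, G_l} and Onsager's relations) is generated as a Lie algebra by the two elements A_0 and A_1. -/
/-!
`[A_1, A_0] = 2 G_1` puts `G_1` in the subalgebra generated by `A_0, A_1`; then
`[G_1, A_m] = A_{m+1} - A_{m-1}` reaches every `A_m` by induction in both directions, and
`[A_l, A_0] = 2 G_l` gives every `G_l`. So the subalgebra contains the whole basis.
-/

theorem AddSubgroupClass.forall_mem_of_succ_sub_pred_mem {M σ : Type*} [AddCommGroup M]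
    [SetLike σ M] [AddSubgroupClass σ M] (S : σ) (f : ℤ → M) (h0 : f 0 ∈ S) (h1 : f 1 ∈ S)
    (hstep : ∀ m, f m ∈ S → f (m + 1) - f (m - 1) ∈ S) (m : ℤ) : f m ∈ S := by
  suffices h : f m ∈ S ∧ f (m + 1) ∈ S from h.1
  induction m using Int.induction_on with
  | zero => exact ⟨h0, by simpa using h1⟩
  | succ i ih =>
    obtain ⟨hi, hi1⟩ := ih
    have hdiff := hstep (i + 1) hi1
    rw [add_sub_cancel_right] at hdiff
    exact ⟨hi1, by simpa using add_mem hdiff hi⟩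
  | pred i ih =>
    obtain ⟨hi, hi1⟩ := ih
    have hdiff := hstep (-i) hi
    exact ⟨by simpa using sub_mem hi1 hdiff, by simpa using hi⟩

theorem LieSubalgebra.mem_of_lie_eq_smul {k L : Type*} [Field k] [LieRing L]
    [LieAlgebra k L] (S : LieSubalgebra k L) {x y z : L} {c : k} (hc : c ≠ 0)
    (hx : x ∈ S) (hy : y ∈ S) (h : ⁅x, y⁆ = c • z) : z ∈ S :=
  (Submodule.smul_mem_iff S.toSubmodule hc).1 (h ▸ S.lie_mem hx hy)

theorem LieSubalgebra.eq_top_of_basis_mem {R L ι : Type*} [CommRing R] [LieRing L]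
    [LieAlgebra R L] (S : LieSubalgebra R L) (b : Module.Basis ι R L) (h : ∀ i, b i ∈ S) :
    S = ⊤ := by
  rw [← toSubmodule_eq_top, eq_top_iff, ← b.span_eq, Submodule.span_le]
  rintro _ ⟨i, rfl⟩
  exact h i

theorem stmt_5_general {k : Type*} [Field k] [CharZero k]
    {O : Type*} [LieRing O] [LieAlgebra k O]
    (A G : ℤ → O)
    (bas : Module.Basis (ℤ ⊕ {l : ℤ // 0 < l}) k O)
    (hbas : ∀ i, bas i = Sum.elim A (fun l => G l.1) i)
    (hAA : ∀ l m : ℤ, m < l → ⁅A l, A m⁆ = (2 : k) • G (l - m))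
    (hGA : ∀ l m : ℤ, 0 < l → ⁅G l, A m⁆ = A (m + l) - A (m - l)) :
    LieSubalgebra.lieSpan k O {A 0, A 1} = ⊤ := by
  set S := LieSubalgebra.lieSpan k O {A 0, A 1}
  have hA0 : A 0 ∈ S := LieSubalgebra.subset_lieSpan (by simp)
  have hA1 : A 1 ∈ S := LieSubalgebra.subset_lieSpan (by simp)
  have hG : ∀ l, 0 < l → A l ∈ S → G l ∈ S := fun l hl hAl =>
    S.mem_of_lie_eq_smul two_ne_zero hAl hA0 (by simpa using hAA l 0 hl)
  have hA : ∀ m, A m ∈ S :=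
    AddSubgroupClass.forall_mem_of_succ_sub_pred_mem S A hA0 hA1 fun m hm =>
      hGA 1 m one_pos ▸ S.lie_mem (hG 1 one_pos hA1) hm
  refine S.eq_top_of_basis_mem bas fun i => ?_
  rw [hbas]
  rcases i with m | ⟨l, hl⟩
  exacts [hA m, hG l hl (hA l)]

/-- The Onsager algebra `O` — the Lie algebra over a field `k` of characteristic zero with
basis `{A_m : m ∈ ℤ} ∪ {G_l : l ≥ 1}`, bracket `[A_l, A_m] = 2 G_{l-m}` for `l > m`,
`[G_l, A_m] = A_{m+l} - A_{m-l}`, `[G_l, G_m] = 0` (`l, m ≥ 1`), and conventions `G_0 = 0`,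
`G_{-m} = -G_m` — is generated as a Lie algebra by the two elements `A_0` and `A_1`. -/
theorem stmt_5 {k : Type*} [Field k] [CharZero k]
    {O : Type*} [LieRing O] [LieAlgebra k O]
    (A G : ℤ → O)
    (bas : Module.Basis (ℤ ⊕ {l : ℤ // 0 < l}) k O)
    (hbas : ∀ i, bas i = Sum.elim A (fun l => G l.1) i)
    (hG0 : G 0 = 0) (hGneg : ∀ m : ℤ, G (-m) = -G m)
    (hAA : ∀ l m : ℤ, m < l → ⁅A l, A m⁆ = (2 : k) • G (l - m))
    (hGA : ∀ l m : ℤ, 0 < l → ⁅G l, A m⁆ = A (m + l) - A (m - l))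
    (hGG : ∀ l m : ℤ, 0 < l → 0 < m → ⁅G l, G m⁆ = 0) :
    LieSubalgebra.lieSpan k O {A 0, A 1} = ⊤ :=
  stmt_5_general A G bas hbas hAA hGA
end

section
/- The Onsager algebra O is isomorphic as a Lie algebra to the Lie algebra OA presented by two generators A, B subject to the Dolan–Grady relations [A,[A,[A,B]]] = 4[A,B] and [B,[B,[B,A]]] = 4[B,A], via the map sending A ↦ A_0 and B ↦ A_1. -/
/-!
Let `x, y` be the images of `A, B` in `OA`, put `g = ½⁅y, x⁆`, and extend `a 0 = x`, `a 1 = y` to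
a sequence `a : ℤ → OA` by `⁅g, a m⁆ = a (m + 1) - a (m - 1)`. The two Dolan–Grady relations say
exactly that `⁅a 2, a 1⁆ = ⁅a 1, a 0⁆ = ⁅a 0, a (-1)⁆`. Since `ad ⁅a 1, a 0⁆` commutes with
`ad ⁅a 2, a 0⁆`, this propagates to `⁅a (m + 1), a m⁆ = ⁅a 1, a 0⁆` for all `m`, and then, by
induction on `d`, `⁅a l, a m⁆` depends only on `l - m`, each `⁅a d, a 0⁆` acts by
`a r ↦ 2 a (r + d) - 2 a (r - d)`, and these brackets commute. So the `a m` and the `½⁅a d, a 0⁆`,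
`d > 0`, span a subspace closed under the bracket that contains the generators: they span `OA`.
The Onsager relations imply the Dolan–Grady relations, so `A ↦ A 0`, `B ↦ A 1` defines a map
`OA → O`; it sends this spanning family onto the basis `{A m} ∪ {G l}`, hence is bijective.
-/

variable (k : Type) [Field k] [CharZero k]

/-- The Lie ideal of the free Lie algebra on two generators `A = of 0`, `B = of 1`
generated by the two Dolan–Grady relators
`[A,[A,[A,B]]] - 4[A,B]` and `[B,[B,[B,A]]] - 4[B,A]`. -/
noncomputable def DGideal : LieIdeal k (FreeLieAlgebra k (Fin 2)) :=
  LieSubmodule.lieSpan k _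
    {⁅FreeLieAlgebra.of k (0 : Fin 2), ⁅FreeLieAlgebra.of k (0 : Fin 2),
        ⁅FreeLieAlgebra.of k (0 : Fin 2), FreeLieAlgebra.of k (1 : Fin 2)⁆⁆⁆ -
        (4 : k) • ⁅FreeLieAlgebra.of k (0 : Fin 2), FreeLieAlgebra.of k (1 : Fin 2)⁆,
      ⁅FreeLieAlgebra.of k (1 : Fin 2), ⁅FreeLieAlgebra.of k (1 : Fin 2),
        ⁅FreeLieAlgebra.of k (1 : Fin 2), FreeLieAlgebra.of k (0 : Fin 2)⁆⁆⁆ -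
        (4 : k) • ⁅FreeLieAlgebra.of k (1 : Fin 2), FreeLieAlgebra.of k (0 : Fin 2)⁆}

/-- The Dolan–Grady algebra `OA`: the quotient of the free Lie algebra on generators `A, B`
by the ideal generated by the Dolan–Grady relations. -/
noncomputable abbrev DGAlgebra := FreeLieAlgebra k (Fin 2) ⧸ DGideal k

section TwoStepSeq

variable {M : Type*} [AddCommGroup M] (D : M → M)

/-- The step `(a m, a (m + 1)) ↦ (a (m + 1), a (m + 2))` of the recurrence
`a (m + 2) = a m + D (a (m + 1))`; it is invertible, so its integer powers run the recurrence
in both directions. -/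
def twoStepPerm : Equiv.Perm (M × M) where
  toFun p := (p.2, p.1 + D p.2)
  invFun p := (p.2 - D p.1, p.1)
  left_inv p := by simp
  right_inv p := by simp

@[simp]
lemma twoStepPerm_apply (p : M × M) : twoStepPerm D p = (p.2, p.1 + D p.2) := rfl

@[simp]
lemma twoStepPerm_symm_apply (p : M × M) : (twoStepPerm D).symm p = (p.2 - D p.1, p.1) := rfl

lemma twoStepPerm_zpow_add_one_apply (m : ℤ) (p : M × M) :
    (twoStepPerm D ^ (m + 1)) p = twoStepPerm D ((twoStepPerm D ^ m) p) := by
  rw [add_comm, zpow_one_add, Equiv.Perm.mul_apply]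

def twoStepSeq (x y : M) (m : ℤ) : M := ((twoStepPerm D ^ m) (x, y)).1

variable {D}

lemma twoStepSeq_zero (x y : M) : twoStepSeq D x y 0 = x := by simp [twoStepSeq]

lemma twoStepSeq_one (x y : M) : twoStepSeq D x y 1 = y := by simp [twoStepSeq]

lemma apply_twoStepSeq (x y : M) (m : ℤ) :
    D (twoStepSeq D x y m) = twoStepSeq D x y (m + 1) - twoStepSeq D x y (m - 1) := by
  have h := twoStepPerm_zpow_add_one_apply D m (x, y)
  have h' := twoStepPerm_zpow_add_one_apply D (m - 1) (x, y)
  rw [sub_add_cancel] at h'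
  simp only [twoStepSeq, h, h', twoStepPerm_apply]
  abel

lemma eq_twoStepSeq {b : ℤ → M} (hb : ∀ m, D (b m) = b (m + 1) - b (m - 1)) :
    b = twoStepSeq D (b 0) (b 1) := by
  have key : ∀ m : ℤ, (twoStepPerm D ^ m) (b 0, b 1) = (b m, b (m + 1)) := by
    intro m
    induction m using Int.induction_on with
    | zero => simp
    | succ i ih =>
      rw [twoStepPerm_zpow_add_one_apply, ih, twoStepPerm_apply, hb]
      simp
    | pred i ih =>
      have h := twoStepPerm_zpow_add_one_apply D (-i - 1) (b 0, b 1)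
      rw [sub_add_cancel, ih] at h
      rw [(Equiv.eq_symm_apply _).2 h.symm, twoStepPerm_symm_apply, hb]
      simp
  funext m
  simp [twoStepSeq, key]

lemma eq_zero_of_apply_eq_sub {b : ℤ → M} (hD : D 0 = 0)
    (hb : ∀ m, D (b m) = b (m + 1) - b (m - 1)) (h0 : b 0 = 0) (h1 : b 1 = 0) : b = 0 := by
  rw [eq_twoStepSeq hb, h0, h1]
  funext m
  exact congrArg Prod.fst (Equiv.Perm.zpow_apply_eq_self_of_apply_eq_self (by simp [hD]) m)

lemma map_twoStepSeq {N F : Type*} [AddCommGroup N] [FunLike F M N] [AddMonoidHomClass F M N]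
    {D' : N → N} (f : F)
    (hf : ∀ z, f (D z) = D' (f z)) (x y : M) (m : ℤ) :
    f (twoStepSeq D x y m) = twoStepSeq D' (f x) (f y) m := by
  have h := eq_twoStepSeq (D := D') (b := fun m ↦ f (twoStepSeq D x y m))
    fun m ↦ by rw [← hf, apply_twoStepSeq (D := D), map_sub]
  simpa [twoStepSeq_zero, twoStepSeq_one] using congrFun h m

end TwoStepSeq

section LieGeneration

variable {R : Type*} [CommRing R] {L : Type*} [LieRing L] [LieAlgebra R L]

theorem FreeLieAlgebra.lieSpan_range_of (X : Type*) :
    LieSubalgebra.lieSpan R (FreeLieAlgebra R X) (Set.range (FreeLieAlgebra.of R)) = ⊤ := by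
  set K := LieSubalgebra.lieSpan R (FreeLieAlgebra R X) (Set.range (FreeLieAlgebra.of R))
  let f := FreeLieAlgebra.lift R fun x ↦ (⟨FreeLieAlgebra.of R x,
    LieSubalgebra.subset_lieSpan (Set.mem_range_self x)⟩ : K)
  have hf : K.incl.comp f = LieHom.id :=
    FreeLieAlgebra.hom_ext fun x ↦ by simp [f]
  refine eq_top_iff.2 fun w _ ↦ ?_
  rw [← LieHom.id_apply (R := R) w, ← hf]
  exact (f w).2

theorem LieSubalgebra.lieSpan_eq_span_of_forall_lie_mem {s : Set L}
    (hs : ∀ x ∈ s, ∀ y ∈ s, ⁅x, y⁆ ∈ Submodule.span R s) :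
    (lieSpan R L s : Submodule R L) = Submodule.span R s := by
  suffices ∀ {x y}, x ∈ Submodule.span R s → y ∈ Submodule.span R s →
      ⁅x, y⁆ ∈ Submodule.span R s by
    refine le_antisymm ?_ (submodule_span_le_lieSpan)
    change _ ≤ (({ Submodule.span R s with lie_mem' := this } : LieSubalgebra R L) :
      Submodule R L)
    exact (toSubmodule_le_toSubmodule _ _).2 (lieSpan_le.2 Submodule.subset_span)
  intro x y hx hy
  induction hx, hy using Submodule.span_induction₂ with
  | mem_mem x y hx hy => exact hs x hx y hy
  | zero_left y hy => simp
  | zero_right x hx => simp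
  | add_left x y z _ _ _ hx hy => simpa using add_mem hx hy
  | add_right x y z _ _ _ hx hy => simpa using add_mem hx hy
  | smul_left r x y _ _ h => simpa using Submodule.smul_mem _ r h
  | smul_right r x y _ _ h => simpa using Submodule.smul_mem _ r h

variable {L' : Type*} [LieRing L'] [LieAlgebra R L']

def LieIdeal.liftQ (I : LieIdeal R L) (f : L →ₗ⁅R⁆ L') (h : I ≤ f.ker) : L ⧸ I →ₗ⁅R⁆ L' :=
  { I.toSubmodule.liftQ (f : L →ₗ[R] L') fun x hx ↦ h hx with
    map_lie' := by
      rintro ⟨x⟩ ⟨y⟩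
      exact f.map_lie x y }

theorem LieIdeal.lieSpan_range_mk_of (X : Type*) (I : LieIdeal R (FreeLieAlgebra R X)) :
    LieSubalgebra.lieSpan R (FreeLieAlgebra R X ⧸ I)
      (Set.range fun x ↦ LieSubmodule.Quotient.mk (FreeLieAlgebra.of R x)) = ⊤ := by
  set K := LieSubalgebra.lieSpan R (FreeLieAlgebra R X ⧸ I)
    (Set.range fun x ↦ LieSubmodule.Quotient.mk (FreeLieAlgebra.of R x))
  let K' : LieSubalgebra R (FreeLieAlgebra R X) :=
    { (K : Submodule R _).comap I.toSubmodule.mkQ with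
      lie_mem' := fun {x y} hx hy ↦ by
        change LieSubmodule.Quotient.mk ⁅x, y⁆ ∈ K
        rw [LieSubmodule.Quotient.mk_bracket]
        exact K.lie_mem hx hy }
  have hK' : K' = ⊤ := by
    rw [eq_top_iff, ← FreeLieAlgebra.lieSpan_range_of, LieSubalgebra.lieSpan_le]
    rintro _ ⟨x, rfl⟩
    exact LieSubalgebra.subset_lieSpan (Set.mem_range_self x)
  refine eq_top_iff.2 fun z _ ↦ ?_
  obtain ⟨w, rfl⟩ := Submodule.Quotient.mk_surjective _ z
  exact (hK' ▸ LieSubalgebra.mem_top w : w ∈ K')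

end LieGeneration

theorem LinearMap.bijective_of_apply_eq_basis {R M N ι : Type*} [CommRing R] [AddCommGroup M]
    [Module R M] [AddCommGroup N] [Module R N] (f : M →ₗ[R] N) {v : ι → M}
    (hv : Submodule.span R (Set.range v) = ⊤) (b : Module.Basis ι R N) (h : ∀ i, f (v i) = b i) :
    Function.Bijective f := by
  let g := b.constr R v
  have hfg : f ∘ₗ g = LinearMap.id := b.ext fun i ↦ by simp [g, h]
  have hgf : g ∘ₗ f = LinearMap.id := LinearMap.ext_on_range hv fun i ↦ by simp [g, h]
  exact ⟨Function.LeftInverse.injective (g := g) (LinearMap.congr_fun hgf),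
    Function.RightInverse.surjective (g := g) (LinearMap.congr_fun hfg)⟩

lemma eq_add_zsmul_of_sub_eq {M : Type*} [AddCommGroup M] {x : ℤ → M} {c : M}
    (h : ∀ m, x (m + 1) - x m = c) (m : ℤ) : x m = x 0 + m • c := by
  induction m using Int.induction_on with
  | zero => simp
  | succ i ih => rw [(sub_eq_iff_eq_add').1 (h i), ih, add_zsmul, one_zsmul, add_assoc]
  | pred i ih =>
    have h' := h (-i - 1)
    rw [sub_add_cancel] at h'
    rw [show x (-i - 1) = x (-i) - c by rw [← h']; abel, ih, sub_zsmul, one_zsmul]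
    abel

section DolanGradySequence

variable {k : Type*} [Field k] {L : Type*} [LieRing L] [LieAlgebra k L]

variable (k) in
/-- `⁅a d, a 0⁆` will play the role of `2 • G d`, and this is Onsager's relation
`⁅G d, A r⁆ = A (r + d) - A (r - d)`. -/
def ActsAsShift (Z : L) (a : ℤ → L) (d : ℤ) : Prop :=
  ∀ r, ⁅Z, a r⁆ = (2 : k) • a (r + d) - (2 : k) • a (r - d)

variable {a : ℤ → L}

lemma ActsAsShift.lie_apply {Z : L} {d : ℤ} (hZ : ActsAsShift k Z a d) (r p q : ℤ)
    (hp : p = r + d) (hq : q = r - d) : ⁅Z, a r⁆ = (2 : k) • a p - (2 : k) • a q := by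
  rw [hp, hq, hZ]

-- The shifted indices are separate arguments so that callers can supply them in normal form.
lemma lie_lie_of_actsAsShift {Z : L} {d : ℤ} (hZ : ActsAsShift k Z a d) (p q p₁ p₂ q₁ q₂ : ℤ)
    (hp₁ : p₁ = p + d) (hp₂ : p₂ = p - d) (hq₁ : q₁ = q + d) (hq₂ : q₂ = q - d) :
    ⁅Z, ⁅a p, a q⁆⁆ = (2 : k) • (⁅a p₁, a q⁆ - ⁅a p₂, a q⁆ + (⁅a p, a q₁⁆ - ⁅a p, a q₂⁆)) := by
  subst hp₁ hp₂ hq₁ hq₂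
  rw [leibniz_lie, hZ, hZ]
  simp only [sub_lie, lie_sub, smul_lie, lie_smul, smul_sub, smul_add]

variable (a) in
def BracketShiftInvariant (d : ℤ) : Prop := ∀ m, ⁅a (m + d), a m⁆ = ⁅a d, a 0⁆

variable (hR : ActsAsShift k ⁅a 1, a 0⁆ a 1)
include hR

lemma lie_lie_lie_zero_one :
    ⁅a 0, ⁅a 0, ⁅a 0, a 1⁆⁆⁆ = (2 : k) • (⁅a 0, a 1⁆ - ⁅a 0, a (-1)⁆) := by
  have h : ⁅a 0, ⁅a 0, a 1⁆⁆ = (2 : k) • a 1 - (2 : k) • a (-1) := by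
    rw [← lie_skew (a 0) (a 1), lie_neg, lie_skew, hR 0, zero_add, zero_sub]
  rw [h, lie_sub, lie_smul, lie_smul, smul_sub]

lemma lie_lie_lie_one_zero :
    ⁅a 1, ⁅a 1, ⁅a 1, a 0⁆⁆⁆ = (2 : k) • (⁅a 1, a 0⁆ - ⁅a 1, a 2⁆) := by
  have h : ⁅a 1, ⁅a 1, a 0⁆⁆ = (2 : k) • a 0 - (2 : k) • a 2 := by
    rw [← lie_skew, hR 1, one_add_one_eq_two, sub_self, neg_sub]
  rw [h, lie_sub, lie_smul, lie_smul, smul_sub]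

lemma two_smul_lie_sub_lie {N : ℤ} (hP' : BracketShiftInvariant a (N - 1))
    (hP : BracketShiftInvariant a N) (m : ℤ) :
    (2 : k) • ⁅a (m + 1 + (N + 1)), a (m + 1)⁆ - (2 : k) • ⁅a (m + (N + 1)), a m⁆ =
      ⁅⁅a 1, a 0⁆, ⁅a N, a 0⁆⁆ := by
  have h := lie_lie_of_actsAsShift hR (m + 1 + N) (m + 1) (m + 1 + (N + 1)) (m + N) (m + 2) m
    (by ring) (by ring) (by ring) (by ring)
  have e₁ := hP' (m + 1)
  have e₂ := hP' (m + 2)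
  rw [show m + 1 + (N - 1) = m + N by ring] at e₁
  rw [show m + 2 + (N - 1) = m + 1 + N by ring] at e₂
  rw [hP, e₁, e₂, show m + 1 + N = m + (N + 1) by ring] at h
  rw [h]
  module

variable (hpos : ⁅a 2, a 1⁆ = ⁅a 1, a 0⁆) (hneg : ⁅a 0, a (-1)⁆ = ⁅a 1, a 0⁆)

include hpos in
lemma lie_lie_two_zero_one : ⁅⁅a 2, a 0⁆, a 1⁆ = (2 : k) • a 3 - (2 : k) • a (-1) := by
  have h2 := hR.lie_apply 2 3 1 (by norm_num) (by norm_num)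
  have h0 := hR.lie_apply 0 1 (-1) (by norm_num) (by norm_num)
  have j := lie_lie (a 1) (a 0) (a 2)
  rw [← lie_skew (a 0) (a 2), ← lie_skew (a 1) (a 2), hpos] at j
  have w1 : ⁅a 1, ⁅a 2, a 0⁆⁆ = -⁅⁅a 2, a 0⁆, a 1⁆ := (lie_skew _ _).symm
  have w2 : ⁅a 0, ⁅a 1, a 0⁆⁆ = -⁅⁅a 1, a 0⁆, a 0⁆ := (lie_skew _ _).symm
  simp only [lie_neg] at j
  linear_combination (norm := module) w1 - j + h2 - w2 + h0

variable [CharZero k]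

lemma dolanGrady_zero_iff :
    ⁅a 0, ⁅a 0, ⁅a 0, a 1⁆⁆⁆ = (4 : k) • ⁅a 0, a 1⁆ ↔ ⁅a 0, a (-1)⁆ = ⁅a 1, a 0⁆ := by
  have skew := (lie_skew (a 0) (a 1)).symm
  rw [lie_lie_lie_zero_one hR]
  constructor <;> intro h
  · apply smul_right_injective L (two_ne_zero (α := k))
    linear_combination (norm := module) -h - (2 : k) • skew
  · linear_combination (norm := module) -(2 : k) • h - (2 : k) • skew

lemma dolanGrady_one_iff :
    ⁅a 1, ⁅a 1, ⁅a 1, a 0⁆⁆⁆ = (4 : k) • ⁅a 1, a 0⁆ ↔ ⁅a 2, a 1⁆ = ⁅a 1, a 0⁆ := by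
  have skew := (lie_skew (a 1) (a 2)).symm
  rw [lie_lie_lie_one_zero hR]
  constructor <;> intro h
  · apply smul_right_injective L (two_ne_zero (α := k))
    linear_combination (norm := module) h + (2 : k) • skew
  · linear_combination (norm := module) (2 : k) • h - (2 : k) • skew

lemma actsAsShift_of_lie_eq_zero {Z : L} {d : ℤ} (hcomm : ⁅⁅a 1, a 0⁆, Z⁆ = 0)
    (h0 : ⁅Z, a 0⁆ = (2 : k) • a d - (2 : k) • a (-d))
    (h1 : ⁅Z, a 1⁆ = (2 : k) • a (1 + d) - (2 : k) • a (1 - d)) : ActsAsShift k Z a d := by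
  set δ : ℤ → L := fun m ↦ ⁅Z, a m⁆ - ((2 : k) • a (m + d) - (2 : k) • a (m - d))
  suffices δ = 0 from fun m ↦ sub_eq_zero.1 (congrFun this m)
  -- `δ` obeys the recurrence defining `a`, because `ad ⁅a 1, a 0⁆` commutes with `ad Z`.
  refine eq_zero_of_apply_eq_sub (D := fun z ↦ (2 : k)⁻¹ • ⁅⁅a 1, a 0⁆, z⁆) (by simp)
    (fun m ↦ ?_) (by simp [δ, h0]) (by simp [δ, h1])
  have hZ : ⁅⁅a 1, a 0⁆, ⁅Z, a m⁆⁆ = ⁅Z, ⁅⁅a 1, a 0⁆, a m⁆⁆ := by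
    rw [leibniz_lie, hcomm, zero_lie, zero_add]
  have e₁ := hR.lie_apply (m + d) (m + 1 + d) (m - 1 + d) (by ring) (by ring)
  have e₂ := hR.lie_apply (m - d) (m + 1 - d) (m - 1 - d) (by ring) (by ring)
  simp only [δ, lie_sub, lie_smul, hZ, e₁, e₂, hR m]
  module

lemma lie_one_neg_one : ⁅a 1, a (-1)⁆ = ⁅a 2, a 0⁆ := by
  have h := lie_lie_of_actsAsShift hR 1 0 2 0 1 (-1) (by norm_num) (by norm_num) (by norm_num)
    (by norm_num)
  rw [lie_self, lie_self, lie_self] at h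
  apply smul_right_injective L (two_ne_zero (α := k))
  linear_combination (norm := module) h

include hneg in
lemma lie_lie_two_zero_zero : ⁅⁅a 2, a 0⁆, a 0⁆ = (2 : k) • a 2 - (2 : k) • a (-2) := by
  have h1 := hR.lie_apply 1 2 0 (by norm_num) (by norm_num)
  have hm1 := hR.lie_apply (-1) 0 (-2) (by norm_num) (by norm_num)
  have j := lie_lie (a 0) (a (-1)) (a 1)
  rw [hneg, ← lie_skew (a (-1)) (a 1), lie_one_neg_one hR, ← lie_skew (a 0) (a 1)] at j
  have w1 : ⁅a 0, ⁅a 2, a 0⁆⁆ = -⁅⁅a 2, a 0⁆, a 0⁆ := (lie_skew _ _).symm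
  have w2 : ⁅a (-1), ⁅a 1, a 0⁆⁆ = -⁅⁅a 1, a 0⁆, a (-1)⁆ := (lie_skew _ _).symm
  simp only [lie_neg] at j
  linear_combination (norm := module) w1 - j + h1 - w2 + hm1

/- `⁅a (m + (N + 1)), a m⁆` is affine in `m` with slope `½⁅⁅a 1, a 0⁆, ⁅a N, a 0⁆⁆`; expanding
`⁅⁅a N, a 0⁆, ⁅a 1, a 0⁆⁆` with the shift action of `⁅a N, a 0⁆` shows that `N + 1` times the
slope vanishes. -/
lemma lie_lie_one_zero_lie_eq_zero {N : ℤ} (hN : 0 ≤ N) (hP' : BracketShiftInvariant a (N - 1))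
    (hP : BracketShiftInvariant a N) (hQ : ActsAsShift k ⁅a N, a 0⁆ a N) :
    ⁅⁅a 1, a 0⁆, ⁅a N, a 0⁆⁆ = 0 := by
  have hX := eq_add_zsmul_of_sub_eq (x := fun m ↦ (2 : k) • ⁅a (m + (N + 1)), a m⁆)
    (two_smul_lie_sub_lie hR hP' hP) (-N)
  rw [← Int.cast_smul_eq_zsmul k, show -N + (N + 1) = 1 by ring, zero_add] at hX
  push_cast at hX
  have h := leibniz_lie ⁅a N, a 0⁆ (a 1) (a 0)
  rw [hQ.lie_apply 1 (N + 1) (1 - N) (by ring) (by ring),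
    hQ.lie_apply 0 N (-N) (by ring) (by ring)] at h
  simp only [sub_lie, smul_lie, lie_sub, lie_smul] at h
  have e₁ := hP' (1 - N)
  rw [show 1 - N + (N - 1) = 0 by ring] at e₁
  have e₂ := hP' 1
  rw [show 1 + (N - 1) = N by ring] at e₂
  have s₁ := lie_skew (a 0) (a (1 - N))
  have s₂ := lie_skew (a N) (a 1)
  have s₃ := lie_skew ⁅a N, a 0⁆ ⁅a 1, a 0⁆
  have h' : ((N : k) + 1) • ⁅⁅a 1, a 0⁆, ⁅a N, a 0⁆⁆ = 0 := by
    linear_combination (norm := module) -s₃ - h + hX - (2 : k) • s₁ - (2 : k) • e₁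
      + (2 : k) • s₂ + (2 : k) • e₂
  refine (smul_eq_zero.1 h').resolve_left ?_
  exact_mod_cast (show (N + 1 : ℤ) ≠ 0 by omega)

lemma bracketShiftInvariant_add_one {N : ℤ} (hN : 0 ≤ N) (hP' : BracketShiftInvariant a (N - 1))
    (hP : BracketShiftInvariant a N) (hQ : ActsAsShift k ⁅a N, a 0⁆ a N) :
    BracketShiftInvariant a (N + 1) := by
  intro m
  have h := eq_add_zsmul_of_sub_eq (x := fun m ↦ (2 : k) • ⁅a (m + (N + 1)), a m⁆)
    (fun m ↦ (two_smul_lie_sub_lie hR hP' hP m).trans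
      (lie_lie_one_zero_lie_eq_zero hR hN hP' hP hQ)) m
  rw [smul_zero, add_zero, zero_add] at h
  exact smul_right_injective L (two_ne_zero (α := k)) h

include hpos hneg

lemma lie_lie_one_zero_lie_two_zero : ⁅⁅a 1, a 0⁆, ⁅a 2, a 0⁆⁆ = 0 := by
  have h1 := lie_lie_of_actsAsShift hR 2 0 3 1 1 (-1) (by ring) (by ring) (by ring) (by ring)
  rw [hpos] at h1
  have h2 := lie_lie_of_actsAsShift hR 1 (-1) 2 0 0 (-2) (by ring) (by ring) (by ring) (by ring)
  rw [lie_one_neg_one hR, hneg] at h2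
  have h3 := leibniz_lie ⁅a 2, a 0⁆ (a 1) (a 0)
  rw [lie_lie_two_zero_one hR hpos, lie_lie_two_zero_zero hR hneg] at h3
  simp only [sub_lie, smul_lie, lie_sub, lie_smul] at h3
  have skew := lie_skew ⁅a 2, a 0⁆ ⁅a 1, a 0⁆
  have x1 : ⁅a (-1), a 0⁆ = -⁅a 1, a 0⁆ := by rw [← lie_skew, hneg]
  have z1 : ⁅a 1, a 2⁆ = -⁅a 1, a 0⁆ := by rw [← lie_skew, hpos]
  apply smul_right_injective L (three_ne_zero (α := k))
  linear_combination (norm := module) h1 + h2 - skew - h3 + (2 : k) • x1 - (2 : k) • z1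

lemma actsAsShift_lie_two_zero : ActsAsShift k ⁅a 2, a 0⁆ a 2 := by
  refine actsAsShift_of_lie_eq_zero hR (lie_lie_one_zero_lie_two_zero hR hpos hneg) ?_ ?_
  · exact lie_lie_two_zero_zero hR hneg
  · rw [show (1 : ℤ) + 2 = 3 by norm_num, show (1 : ℤ) - 2 = -1 by norm_num]
    exact lie_lie_two_zero_one hR hpos

lemma lie_two_neg_one : ⁅a 2, a (-1)⁆ = ⁅a 3, a 0⁆ := by
  have h := lie_lie_of_actsAsShift hR 2 0 3 1 1 (-1) (by ring) (by ring) (by ring) (by ring)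
  rw [hpos, lie_lie_one_zero_lie_two_zero hR hpos hneg] at h
  apply smul_right_injective L (two_ne_zero (α := k))
  linear_combination (norm := module) h

lemma lie_one_neg_two : ⁅a 1, a (-2)⁆ = ⁅a 3, a 0⁆ := by
  have h := lie_lie_of_actsAsShift hR 1 (-1) 2 0 0 (-2) (by ring) (by ring) (by ring) (by ring)
  rw [lie_one_neg_one hR, hneg, lie_lie_one_zero_lie_two_zero hR hpos hneg] at h
  apply smul_right_injective L (two_ne_zero (α := k))
  linear_combination (norm := module) h + (2 : k) • lie_two_neg_one hR hpos hneg

variable (a) in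
/-- The invariant of the induction behind `lie_add_one`: it moves one step up or down using only
that `ad ⁅a 1, a 0⁆` and `ad ⁅a 2, a 0⁆` commute and act as shifts. -/
def BracketWindow (m : ℤ) : Prop :=
  ⁅a (m + 1), a m⁆ = ⁅a 1, a 0⁆ ∧ ⁅a m, a (m - 1)⁆ = ⁅a 1, a 0⁆ ∧ ⁅a (m + 2), a m⁆ = ⁅a 2, a 0⁆ ∧
    ⁅a (m + 2), a (m - 1)⁆ = ⁅a 3, a 0⁆ ∧ ⁅a (m + 1), a (m - 2)⁆ = ⁅a 3, a 0⁆

lemma bracketWindow_zero : BracketWindow a 0 := by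
  simp only [BracketWindow, zero_add, zero_sub, true_and]
  exact ⟨hneg, lie_two_neg_one hR hpos hneg, lie_one_neg_two hR hpos hneg⟩

lemma BracketWindow.add_one {m : ℤ} (hw : BracketWindow a m) : BracketWindow a (m + 1) := by
  obtain ⟨hS, hS', hU, hV, hV'⟩ := hw
  have hcomm := lie_lie_one_zero_lie_two_zero hR hpos hneg
  have h1 := lie_lie_of_actsAsShift hR (m + 2) m (m + 3) (m + 1) (m + 1) (m - 1)
    (by ring) (by ring) (by ring) (by ring)
  rw [hU, hcomm, hS, hV] at h1
  have h2 := lie_lie_of_actsAsShift (actsAsShift_lie_two_zero hR hpos hneg) (m + 1) m (m + 3)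
    (m - 1) (m + 2) (m - 2) (by ring) (by ring) (by ring) (by ring)
  rw [hS, ← lie_skew, hcomm, neg_zero, hV'] at h2
  have skew₁ : ⁅a (m - 1), a m⁆ = -⁅a 1, a 0⁆ := by rw [← lie_skew, hS']
  have skew₂ := (lie_skew (a (m + 1)) (a (m + 2))).symm
  have hVnext : ⁅a (m + 3), a m⁆ = ⁅a 3, a 0⁆ := by
    apply smul_right_injective L (by norm_num : (4 : k) ≠ 0)
    linear_combination (norm := module) -h1 - h2 - (2 : k) • skew₂ + (2 : k) • skew₁
  have hSnext : ⁅a (m + 2), a (m + 1)⁆ = ⁅a 1, a 0⁆ := by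
    apply smul_right_injective L (two_ne_zero (α := k))
    linear_combination (norm := module) -h1 - (2 : k) • hVnext
  have h3 := lie_lie_of_actsAsShift hR (m + 2) (m + 1) (m + 3) (m + 1) (m + 2) m
    (by ring) (by ring) (by ring) (by ring)
  rw [hSnext, lie_self, lie_self, lie_self, hU] at h3
  have hUnext : ⁅a (m + 3), a (m + 1)⁆ = ⁅a 2, a 0⁆ := by
    apply smul_right_injective L (two_ne_zero (α := k))
    linear_combination (norm := module) -h3
  simp only [BracketWindow, show m + 1 + 1 = m + 2 by ring, add_sub_cancel_right,
    show m + 1 + 2 = m + 3 by ring, show m + 1 - 2 = m - 1 by ring]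
  exact ⟨hSnext, hS, hUnext, hVnext, hV⟩

lemma BracketWindow.sub_one {m : ℤ} (hw : BracketWindow a m) : BracketWindow a (m - 1) := by
  obtain ⟨hS, hS', hU, hV, hV'⟩ := hw
  have hcomm := lie_lie_one_zero_lie_two_zero hR hpos hneg
  have k1 := lie_lie_of_actsAsShift hR (m + 1) m (m + 2) m (m + 1) (m - 1)
    (by ring) (by ring) (by ring) (by ring)
  rw [hS, lie_self, lie_self, lie_self, hU] at k1
  have hUprev : ⁅a (m + 1), a (m - 1)⁆ = ⁅a 2, a 0⁆ := by
    apply smul_right_injective L (two_ne_zero (α := k))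
    linear_combination (norm := module) k1
  have k2 := lie_lie_of_actsAsShift hR m (m - 1) (m + 1) (m - 1) m (m - 2)
    (by ring) (by ring) (by ring) (by ring)
  rw [hS', lie_self, lie_self, lie_self, hUprev] at k2
  have hU2 : ⁅a m, a (m - 2)⁆ = ⁅a 2, a 0⁆ := by
    apply smul_right_injective L (two_ne_zero (α := k))
    linear_combination (norm := module) k2
  have g1 := lie_lie_of_actsAsShift (actsAsShift_lie_two_zero hR hpos hneg) m (m - 1) (m + 2)
    (m - 2) (m + 1) (m - 3) (by ring) (by ring) (by ring) (by ring)
  rw [hS', ← lie_skew, hcomm, neg_zero, hV] at g1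
  have g2 := lie_lie_of_actsAsShift hR m (m - 2) (m + 1) (m - 1) (m - 1) (m - 3)
    (by ring) (by ring) (by ring) (by ring)
  rw [hU2, hcomm, hV', hS'] at g2
  have skew₁ := (lie_skew (a (m - 2)) (a (m - 1))).symm
  have skew₂ : ⁅a m, a (m + 1)⁆ = -⁅a 1, a 0⁆ := by rw [← lie_skew, hS]
  have hVprev : ⁅a m, a (m - 3)⁆ = ⁅a 3, a 0⁆ := by
    apply smul_right_injective L (by norm_num : (4 : k) ≠ 0)
    linear_combination (norm := module) g1 + g2 - (2 : k) • skew₁ + (2 : k) • skew₂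
  have hSprev : ⁅a (m - 1), a (m - 2)⁆ = ⁅a 1, a 0⁆ := by
    apply smul_right_injective L (two_ne_zero (α := k))
    linear_combination (norm := module) g2 - (2 : k) • hVprev
  simp only [BracketWindow, sub_add_cancel, show m - 1 - 1 = m - 2 by ring,
    show m - 1 + 2 = m + 1 by ring, show m - 1 - 2 = m - 3 by ring]
  exact ⟨hS', hSprev, hUprev, hV', hVprev⟩

lemma bracketWindow (m : ℤ) : BracketWindow a m := by
  induction m using Int.induction_on with
  | zero => exact bracketWindow_zero hR hpos hneg
  | succ i ih => exact ih.add_one hR hpos hneg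
  | pred i ih => exact ih.sub_one hR hpos hneg

lemma lie_add_one (m : ℤ) : ⁅a (m + 1), a m⁆ = ⁅a 1, a 0⁆ :=
  (bracketWindow hR hpos hneg m).1

lemma actsAsShift_add_one {N : ℤ} (hP : BracketShiftInvariant a N)
    (hP₁ : BracketShiftInvariant a (N + 1)) (hQ : ActsAsShift k ⁅a N, a 0⁆ a N) :
    ActsAsShift k ⁅a (N + 1), a 0⁆ a (N + 1) := by
  intro r
  have h := hQ (r - 1)
  have e₁ := lie_add_one hR hpos hneg (r - 1)
  have e₂ := hP₁ (r - 1)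
  rw [sub_add_cancel] at e₁
  rw [show r - 1 + (N + 1) = r + N by ring] at e₂
  rw [← hP r, lie_lie, e₁, e₂] at h
  have k₁ := hR.lie_apply (r + N) (r + (N + 1)) (r - 1 + N) (by ring) (by ring)
  rw [show r - (N + 1) = r - 1 - N by ring]
  linear_combination (norm := module) h + lie_skew (a (r + N)) ⁅a 1, a 0⁆ + k₁
    - lie_skew ⁅a (N + 1), a 0⁆ (a r)

lemma bracketShiftInvariant_and_actsAsShift (n : ℕ) :
    (BracketShiftInvariant a n ∧ ActsAsShift k ⁅a n, a 0⁆ a n) ∧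
      (BracketShiftInvariant a (n + 1) ∧ ActsAsShift k ⁅a (n + 1), a 0⁆ a (n + 1)) := by
  induction n with
  | zero =>
    refine ⟨⟨fun m ↦ ?_, fun r ↦ ?_⟩, ⟨fun m ↦ ?_, ?_⟩⟩
    · simp
    · simp
    · simpa using lie_add_one hR hpos hneg m
    · simpa using hR
  | succ n ih =>
    obtain ⟨⟨hP', -⟩, hP, hQ⟩ := ih
    push_cast
    have hP'' : BracketShiftInvariant a ((n + 1 : ℤ) - 1) := by rwa [add_sub_cancel_right]
    have hP₁ := bracketShiftInvariant_add_one hR (by positivity) hP'' hP hQ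
    exact ⟨⟨hP, hQ⟩, hP₁, actsAsShift_add_one hR hpos hneg hP hP₁ hQ⟩

theorem lie_eq_lie_sub (l m : ℤ) : ⁅a l, a m⁆ = ⁅a (l - m), a 0⁆ := by
  have key : ∀ l m : ℤ, m ≤ l → ⁅a l, a m⁆ = ⁅a (l - m), a 0⁆ := by
    intro l m hml
    have h := (bracketShiftInvariant_and_actsAsShift hR hpos hneg (l - m).toNat).1.1 m
    rwa [Int.toNat_of_nonneg (sub_nonneg.2 hml), add_sub_cancel] at h
  rcases le_total m l with hml | hlm
  · exact key l m hml
  · have h := key 0 (l - m) (by omega)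
    rw [← lie_skew, key m l hlm, ← lie_skew (a (l - m)), h, zero_sub, neg_sub]

theorem actsAsShift_lie {d : ℤ} (hd : 0 ≤ d) : ActsAsShift k ⁅a d, a 0⁆ a d := by
  lift d to ℕ using hd
  exact (bracketShiftInvariant_and_actsAsShift hR hpos hneg d).1.2

theorem lie_lie_lie_eq_zero {d : ℤ} (hd : 0 ≤ d) (e : ℤ) : ⁅⁅a d, a 0⁆, ⁅a e, a 0⁆⁆ = 0 := by
  have h := lie_lie_of_actsAsShift (actsAsShift_lie hR hpos hneg hd) e 0 (e + d) (e - d) d (-d)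
    (by ring) (by ring) (by ring) (by ring)
  rw [lie_eq_lie_sub hR hpos hneg e d, lie_eq_lie_sub hR hpos hneg e (-d), sub_neg_eq_add] at h
  rw [h]
  module

variable (k a) in
def onsagerFamily : ℤ ⊕ {l : ℤ // 0 < l} → L := Sum.elim a fun l ↦ (2 : k)⁻¹ • ⁅a l, a 0⁆

lemma lie_mem_span_onsagerFamily (i j : ℤ ⊕ {l : ℤ // 0 < l}) :
    ⁅onsagerFamily k a i, onsagerFamily k a j⁆ ∈
      Submodule.span k (Set.range (onsagerFamily k a)) := by
  set S := Submodule.span k (Set.range (onsagerFamily k a))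
  have hA : ∀ m, a m ∈ S := fun m ↦ Submodule.subset_span ⟨Sum.inl m, rfl⟩
  have hWpos : ∀ d, 0 < d → ⁅a d, a 0⁆ ∈ S := fun d hd ↦ by
    rw [← smul_inv_smul₀ (two_ne_zero' k) ⁅a d, a 0⁆]
    exact S.smul_mem _ (Submodule.subset_span ⟨Sum.inr ⟨d, hd⟩, rfl⟩)
  have hW : ∀ d, ⁅a d, a 0⁆ ∈ S := by
    intro d
    rcases lt_trichotomy d 0 with hd | rfl | hd
    · rw [← lie_skew, lie_eq_lie_sub hR hpos hneg 0 d, zero_sub]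
      exact S.neg_mem (hWpos _ (neg_pos.2 hd))
    · rw [lie_self]
      exact S.zero_mem
    · exact hWpos d hd
  have hshift : ∀ d, 0 ≤ d → ∀ m, ⁅⁅a d, a 0⁆, a m⁆ ∈ S := fun d hd m ↦ by
    rw [actsAsShift_lie hR hpos hneg hd m]
    exact S.sub_mem (S.smul_mem _ (hA _)) (S.smul_mem _ (hA _))
  rcases i with m | ⟨d, hd⟩ <;> rcases j with m' | ⟨e, he⟩ <;>
    simp only [onsagerFamily, Sum.elim_inl, Sum.elim_inr]
  · rw [lie_eq_lie_sub hR hpos hneg]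
    exact hW _
  · rw [lie_smul, ← lie_skew]
    exact S.smul_mem _ (S.neg_mem (hshift e he.le m))
  · rw [smul_lie]
    exact S.smul_mem _ (hshift d hd.le m')
  · rw [smul_lie, lie_smul, lie_lie_lie_eq_zero hR hpos hneg hd.le, smul_zero, smul_zero]
    exact S.zero_mem

lemma span_range_onsagerFamily (hgen : LieSubalgebra.lieSpan k L {a 0, a 1} = ⊤) :
    Submodule.span k (Set.range (onsagerFamily k a)) = ⊤ := by
  rw [← LieSubalgebra.lieSpan_eq_span_of_forall_lie_mem, eq_top_iff,
    ← LieSubalgebra.top_toSubmodule, ← hgen, LieSubalgebra.toSubmodule_le_toSubmodule]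
  · refine LieSubalgebra.lieSpan_mono ?_
    rintro _ (rfl | rfl)
    exacts [⟨Sum.inl 0, rfl⟩, ⟨Sum.inl 1, rfl⟩]
  · rintro _ ⟨i, rfl⟩ _ ⟨j, rfl⟩
    exact lie_mem_span_onsagerFamily hR hpos hneg i j

end DolanGradySequence

section OnsagerRelations

variable {k : Type*} [Field k] {O : Type*} [LieRing O] [LieAlgebra k O] {A G : ℤ → O}
  (hAA : ∀ l m : ℤ, m < l → ⁅A l, A m⁆ = (2 : k) • G (l - m))
  (hGA : ∀ l m : ℤ, 0 < l → ⁅G l, A m⁆ = A (m + l) - A (m - l))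
include hAA hGA

lemma actsAsShift_of_onsager : ActsAsShift k ⁅A 1, A 0⁆ A 1 := fun m ↦ by
  rw [hAA 1 0 one_pos, sub_zero, smul_lie, hGA 1 m one_pos, smul_sub]

variable [CharZero k]

lemma dolanGrady_zero_of_onsager : ⁅A 0, ⁅A 0, ⁅A 0, A 1⁆⁆⁆ = (4 : k) • ⁅A 0, A 1⁆ :=
  (dolanGrady_zero_iff (actsAsShift_of_onsager hAA hGA)).2 <| by
    rw [hAA 0 (-1) (by norm_num), hAA 1 0 one_pos]
    norm_num

lemma dolanGrady_one_of_onsager : ⁅A 1, ⁅A 1, ⁅A 1, A 0⁆⁆⁆ = (4 : k) • ⁅A 1, A 0⁆ :=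
  (dolanGrady_one_iff (actsAsShift_of_onsager hAA hGA)).2 <| by
    rw [hAA 2 1 (by norm_num), hAA 1 0 one_pos]
    norm_num

end OnsagerRelations

namespace DGAlgebra

variable (k : Type) [Field k]

noncomputable abbrev gen (i : Fin 2) : DGAlgebra k :=
  LieSubmodule.Quotient.mk (N := DGideal k) (FreeLieAlgebra.of k i)

lemma dolanGrady_gen_zero :
    ⁅gen k 0, ⁅gen k 0, ⁅gen k 0, gen k 1⁆⁆⁆ = (4 : k) • ⁅gen k 0, gen k 1⁆ := by
  rw [← sub_eq_zero]
  simp only [gen, ← LieSubmodule.Quotient.mk_bracket]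
  exact (LieSubmodule.Quotient.mk_eq_zero' (N := DGideal k)).2
    (LieSubmodule.subset_lieSpan (Set.mem_insert _ _))

lemma dolanGrady_gen_one :
    ⁅gen k 1, ⁅gen k 1, ⁅gen k 1, gen k 0⁆⁆⁆ = (4 : k) • ⁅gen k 1, gen k 0⁆ := by
  rw [← sub_eq_zero]
  simp only [gen, ← LieSubmodule.Quotient.mk_bracket]
  exact (LieSubmodule.Quotient.mk_eq_zero' (N := DGideal k)).2
    (LieSubmodule.subset_lieSpan (Set.mem_insert_of_mem _ rfl))

theorem lieSpan_gen : LieSubalgebra.lieSpan k (DGAlgebra k) {gen k 0, gen k 1} = ⊤ := by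
  rw [← LieIdeal.lieSpan_range_mk_of (Fin 2) (DGideal k)]
  congr
  ext
  simp [Fin.exists_fin_two, eq_comm]

variable {L : Type*} [LieRing L] [LieAlgebra k L]

noncomputable def lift (x y : L) (hx : ⁅x, ⁅x, ⁅x, y⁆⁆⁆ = (4 : k) • ⁅x, y⁆)
    (hy : ⁅y, ⁅y, ⁅y, x⁆⁆⁆ = (4 : k) • ⁅y, x⁆) : DGAlgebra k →ₗ⁅k⁆ L :=
  (DGideal k).liftQ (FreeLieAlgebra.lift k ![x, y]) <| LieSubmodule.lieSpan_le.2 <| by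
    rintro _ (rfl | rfl) <;> simp [hx, hy]

@[simp]
lemma lift_gen_zero (x y : L) (hx hy) : lift k x y hx hy (gen k 0) = x :=
  FreeLieAlgebra.lift_of_apply (R := k) ![x, y] 0

@[simp]
lemma lift_gen_one (x y : L) (hx hy) : lift k x y hx hy (gen k 1) = y :=
  FreeLieAlgebra.lift_of_apply (R := k) ![x, y] 1

noncomputable def seq : ℤ → DGAlgebra k :=
  twoStepSeq (fun z ↦ ⁅(2 : k)⁻¹ • ⁅gen k 1, gen k 0⁆, z⁆) (gen k 0) (gen k 1)

lemma seq_zero : seq k 0 = gen k 0 := twoStepSeq_zero _ _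

lemma seq_one : seq k 1 = gen k 1 := twoStepSeq_one _ _

lemma actsAsShift_seq [CharZero k] : ActsAsShift k ⁅seq k 1, seq k 0⁆ (seq k) 1 := fun m ↦ by
  rw [seq_zero, seq_one, ← smul_inv_smul₀ (two_ne_zero' k) ⁅gen k 1, gen k 0⁆, smul_lie,
    ← smul_sub]
  exact congrArg _ (apply_twoStepSeq _ _ m)

lemma span_range_onsagerFamily_seq [CharZero k] :
    Submodule.span k (Set.range (onsagerFamily k (seq k))) = ⊤ := by
  have hR := actsAsShift_seq k
  refine span_range_onsagerFamily hR ((dolanGrady_one_iff hR).1 ?_)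
    ((dolanGrady_zero_iff hR).1 ?_) ?_
  · rw [seq_zero, seq_one]
    exact dolanGrady_gen_one k
  · rw [seq_zero, seq_one]
    exact dolanGrady_gen_zero k
  · rw [seq_zero, seq_one]
    exact lieSpan_gen k

lemma lift_seq (x y : L) (hx hy) (m : ℤ) :
    lift k x y hx hy (seq k m) = twoStepSeq (fun z ↦ ⁅(2 : k)⁻¹ • ⁅y, x⁆, z⁆) x y m := by
  rw [seq, map_twoStepSeq (lift k x y hx hy), lift_gen_zero, lift_gen_one]
  intro z
  simp

end DGAlgebra

theorem stmt_6 {O : Type*} [LieRing O] [LieAlgebra k O]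
    (A G : ℤ → O)
    (bas : Module.Basis (ℤ ⊕ {l : ℤ // 0 < l}) k O)
    (hbas : ∀ i, bas i = Sum.elim A (fun l => G l.1) i)
    (hAA : ∀ l m : ℤ, m < l → ⁅A l, A m⁆ = (2 : k) • G (l - m))
    (hGA : ∀ l m : ℤ, 0 < l → ⁅G l, A m⁆ = A (m + l) - A (m - l)) :
    ∃ Φ : DGAlgebra k ≃ₗ⁅k⁆ O,
      Φ (LieSubmodule.Quotient.mk (N := DGideal k) (FreeLieAlgebra.of k (0 : Fin 2))) = A 0 ∧
      Φ (LieSubmodule.Quotient.mk (N := DGideal k) (FreeLieAlgebra.of k (1 : Fin 2))) = A 1 := by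
  have hx := dolanGrady_zero_of_onsager hAA hGA
  have hy := dolanGrady_one_of_onsager hAA hGA
  set Φ := DGAlgebra.lift k (A 0) (A 1) hx hy
  have hG : (2 : k)⁻¹ • ⁅A 1, A 0⁆ = G 1 := by
    rw [hAA 1 0 one_pos, sub_zero, inv_smul_smul₀ (two_ne_zero' k)]
  have hΦA : ∀ m, Φ (DGAlgebra.seq k m) = A m := fun m ↦ by
    rw [DGAlgebra.lift_seq, hG, ← eq_twoStepSeq fun m ↦ hGA 1 m one_pos]
  have hΦ : ∀ i, Φ (onsagerFamily k (DGAlgebra.seq k) i) = bas i := by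
    rintro (m | ⟨l, hl⟩)
    · simp [onsagerFamily, hbas, hΦA]
    · simp [onsagerFamily, hbas, hΦA, hAA l 0 hl]
  exact ⟨LieEquiv.ofBijective Φ (LinearMap.bijective_of_apply_eq_basis Φ.toLinearMap
    (DGAlgebra.span_range_onsagerFamily_seq k) bas hΦ), DGAlgebra.lift_gen_zero k _ _ hx hy,
    DGAlgebra.lift_gen_one k _ _ hx hy⟩
end

section
/- Let ω be the Chevalley involution of the sl₂-loop algebra L = sl₂ ⊗ k[t,t⁻¹] given by ω(p(t) ⊗ e) = p(t⁻¹) ⊗ f, ω(p(t) ⊗ f) = p(t⁻¹) ⊗ e, ω(p(t) ⊗ h) = −p(t⁻¹) ⊗ h. Then the elements c_l = (t^l − t^{−l}) ⊗ h (l ≥ 1) and b_m = t^m ⊗ e + t^{−m} ⊗ f (m ∈ ℤ) form a k-basis of the fixed-point subalgebra L^ω. -/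
open LaurentPolynomial

/-!
Write `B(n, i) = T n • bᵢ` for the `k`-basis of `L` obtained from the `k[T;T⁻¹]`-basis
`e, f, h`. The involution `ω` permutes this basis up to sign:
`B(n, e) ↔ B(-n, f)` and `B(n, h) ↦ -B(-n, h)`. Since `2` is invertible, the fixed points of an
involution are exactly the range of `1 + ω`, hence the span of the vectors `(1 + ω) B(n, i)`;
these are, up to sign and repetition, the `b_m` and the `c_l` (with `c_0 = 0`). Linear
independence follows by reading off the coefficient of `B(m, e)` in `b_m` and of `B(l, h)` in `c_l`,
`l > 0`.
-/

theorem LinearMap.ker_sub_id_eq_range_id_add {R M : Type*} [Ring R] [Invertible (2 : R)]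
    [AddCommGroup M] [Module R M] (ω : M →ₗ[R] M) (hω : ∀ x, ω (ω x) = x) :
    ker (ω - id) = range (id + ω) := by
  ext x
  simp only [mem_ker, mem_range, sub_apply, add_apply, id_apply, sub_eq_zero]
  constructor
  · intro hx
    refine ⟨(⅟2 : R) • x, ?_⟩
    rw [map_smul, hx, ← add_smul, invOf_two_add_invOf_two, one_smul]
  · rintro ⟨y, rfl⟩
    rw [map_add, hω, add_comm]

theorem LinearMap.range_eq_span_range_comp_basis {R M N ι : Type*} [Semiring R]
    [AddCommMonoid M] [Module R M] [AddCommMonoid N] [Module R N] (f : M →ₗ[R] N)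
    (b : Module.Basis ι R M) : range f = Submodule.span R (Set.range (f ∘ b)) := by
  rw [range_eq_map, ← b.span_eq, Submodule.map_span, Set.range_comp]

namespace LaurentPolynomial

variable {k L : Type*} [CommRing k] [AddCommGroup L] [Module k L] [Module k[T;T⁻¹] L]
  (bas : Module.Basis (Fin 3) k[T;T⁻¹] L)

noncomputable def chevalleyFixedFamily : {l : ℤ // 0 < l} ⊕ ℤ → L :=
  Sum.elim (fun l => (T l.1 - T (-l.1) : k[T;T⁻¹]) • bas 2)
    (fun m => (T m : k[T;T⁻¹]) • bas 0 + (T (-m) : k[T;T⁻¹]) • bas 1)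

theorem T_sub_T_neg_smul_mem_span_chevalleyFixedFamily (n : ℤ) :
    (T n - T (-n) : k[T;T⁻¹]) • bas 2 ∈
      Submodule.span k (Set.range (chevalleyFixedFamily bas)) := by
  rcases lt_trichotomy 0 n with hn | rfl | hn
  · exact Submodule.subset_span ⟨.inl ⟨n, hn⟩, rfl⟩
  · simp
  · rw [← neg_sub, neg_smul, ← neg_neg n, neg_neg (-n)]
    exact neg_mem (Submodule.subset_span ⟨.inl ⟨-n, by omega⟩, rfl⟩)

variable [IsScalarTower k k[T;T⁻¹] L]

noncomputable def monomialBasis : Module.Basis (ℤ × Fin 3) k L :=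
  (AddMonoidAlgebra.basis ℤ k).smulTower bas

@[simp]
theorem monomialBasis_apply (n : ℤ) (i : Fin 3) :
    monomialBasis bas (n, i) = (T n : k[T;T⁻¹]) • bas i := by
  simp [monomialBasis]

@[simp]
theorem monomialBasis_repr_T_smul (n m : ℤ) (i j : Fin 3) :
    (monomialBasis bas).repr ((T n : k[T;T⁻¹]) • bas i) (m, j) =
      if n = m ∧ i = j then 1 else 0 := by
  classical
  rw [← monomialBasis_apply, Module.Basis.repr_self_apply]
  simp only [Prod.mk.injEq]

theorem linearIndependent_chevalleyFixedFamily [Nontrivial k] :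
    LinearIndependent k (chevalleyFixedFamily bas) := by
  let leadingCoord : {l : ℤ // 0 < l} ⊕ ℤ → Module.Dual k L :=
    Sum.elim (fun l => (monomialBasis bas).coord (l.1, 2))
      (fun m => (monomialBasis bas).coord (m, 0))
  refine .of_pairwise_dual_eq_zero_one _ leadingCoord ?_ ?_
  · rintro (⟨l, hl⟩ | m) (⟨l', hl'⟩ | m') hne <;>
      simp [leadingCoord, chevalleyFixedFamily, sub_smul] at hne ⊢ <;> grind
  · rintro (⟨l, hl⟩ | m)
    · simp [leadingCoord, chevalleyFixedFamily, sub_smul]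
      omega
    · simp [leadingCoord, chevalleyFixedFamily]

section Involution

variable (ω : L →ₗ[k] L) (hωsmul : ∀ (p : k[T;T⁻¹]) (x : L), ω (p • x) = invert p • ω x)
  (hω₀ : ω (bas 0) = bas 1) (hω₁ : ω (bas 1) = bas 0) (hω₂ : ω (bas 2) = -bas 2)
include hωsmul hω₀ hω₁ hω₂

theorem apply_apply_of_invert_semilinear (x : L) : ω (ω x) = x := by
  suffices ω ∘ₗ ω = LinearMap.id from LinearMap.congr_fun this x
  refine (monomialBasis bas).ext fun ⟨n, i⟩ => ?_
  fin_cases i <;> simp [hωsmul, hω₀, hω₁, hω₂]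

theorem span_chevalleyFixedFamily_eq_span_id_add :
    Submodule.span k (Set.range (chevalleyFixedFamily bas)) =
      Submodule.span k (Set.range ((LinearMap.id + ω : L →ₗ[k] L) ∘ monomialBasis bas)) := by
  apply le_antisymm
  · refine Submodule.span_mono ?_
    rintro _ ⟨l | m, rfl⟩
    · exact ⟨(l.1, 2), by simp [chevalleyFixedFamily, hωsmul, hω₂, sub_smul, ← sub_eq_add_neg]⟩
    · exact ⟨(m, 0), by simp [chevalleyFixedFamily, hωsmul, hω₀]⟩
  · rw [Submodule.span_le]
    rintro _ ⟨⟨n, i⟩, rfl⟩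
    fin_cases i
    · exact Submodule.subset_span ⟨.inr n, by simp [chevalleyFixedFamily, hωsmul, hω₀]⟩
    · exact Submodule.subset_span
        ⟨.inr (-n), by simp [chevalleyFixedFamily, hωsmul, hω₁, add_comm]⟩
    · simpa [hωsmul, hω₂, sub_smul, ← sub_eq_add_neg] using
        T_sub_T_neg_smul_mem_span_chevalleyFixedFamily bas n

theorem span_chevalleyFixedFamily_eq_ker [Invertible (2 : k)] :
    Submodule.span k (Set.range (chevalleyFixedFamily bas)) =
      LinearMap.ker (ω - LinearMap.id) := by
  rw [LinearMap.ker_sub_id_eq_range_id_add ω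
      (apply_apply_of_invert_semilinear bas ω hωsmul hω₀ hω₁ hω₂),
    LinearMap.range_eq_span_range_comp_basis _ (monomialBasis bas),
    span_chevalleyFixedFamily_eq_span_id_add bas ω hωsmul hω₀ hω₁ hω₂]

end Involution

end LaurentPolynomial

theorem stmt_7_general {k : Type*} [Field k] [CharZero k]
    {L : Type*} [LieRing L] [LieAlgebra k L]
    [Module (LaurentPolynomial k) L] [IsScalarTower k (LaurentPolynomial k) L]
    (e f h : L)
    (bas : Module.Basis (Fin 3) (LaurentPolynomial k) L)
    (hbas : bas 0 = e ∧ bas 1 = f ∧ bas 2 = h)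
    (ω : L →ₗ[k] L)
    (hωsmul : ∀ (p : LaurentPolynomial k) (x : L), ω (p • x) = invert p • ω x)
    (hωe : ω e = f) (hωf : ω f = e) (hωh : ω h = -h) :
    let v : ({l : ℤ // 0 < l} ⊕ ℤ) → L :=
      Sum.elim (fun l => ((T l.1 - T (-l.1) : LaurentPolynomial k)) • h)
        (fun m => (T m : LaurentPolynomial k) • e + (T (-m) : LaurentPolynomial k) • f)
    LinearIndependent k v ∧
      Submodule.span k (Set.range v) = LinearMap.ker (ω - LinearMap.id) := by
  obtain ⟨rfl, rfl, rfl⟩ := hbas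
  have : Invertible (2 : k) := invertibleOfNonzero two_ne_zero
  exact ⟨linearIndependent_chevalleyFixedFamily bas,
    span_chevalleyFixedFamily_eq_ker bas ω hωsmul hωe hωf hωh⟩

/-- Let `ω` be the Chevalley involution of the sl₂-loop algebra
`L = sl₂ ⊗ k[t,t⁻¹]` (axiomatized as the free `k[t,t⁻¹]`-module on `e, f, h` with
`k[t,t⁻¹]`-bilinear bracket), determined by `ω(p(t) ⊗ e) = p(t⁻¹) ⊗ f`,
`ω(p(t) ⊗ f) = p(t⁻¹) ⊗ e`, `ω(p(t) ⊗ h) = -p(t⁻¹) ⊗ h`.  Then the elements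
`c_l = (t^l - t^{-l}) ⊗ h` (`l ≥ 1`) and `b_m = t^m ⊗ e + t^{-m} ⊗ f` (`m ∈ ℤ`) form a
`k`-basis of the fixed-point subalgebra `L^ω`, i.e. they are linearly independent over `k`
and span `L^ω = ker (ω - id)`. -/
theorem stmt_7 {k : Type*} [Field k] [IsAlgClosed k] [CharZero k]
    {L : Type*} [LieRing L] [LieAlgebra k L]
    [Module (LaurentPolynomial k) L] [IsScalarTower k (LaurentPolynomial k) L]
    (e f h : L)
    (bas : Module.Basis (Fin 3) (LaurentPolynomial k) L)
    (hbas : bas 0 = e ∧ bas 1 = f ∧ bas 2 = h)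
    (hsmul : ∀ (p : LaurentPolynomial k) (x y : L), ⁅p • x, y⁆ = p • ⁅x, y⁆)
    (hef : ⁅e, f⁆ = h) (hhe : ⁅h, e⁆ = (2 : k) • e) (hhf : ⁅h, f⁆ = -((2 : k) • f))
    (ω : L →ₗ[k] L)
    (hωsmul : ∀ (p : LaurentPolynomial k) (x : L), ω (p • x) = invert p • ω x)
    (hωe : ω e = f) (hωf : ω f = e) (hωh : ω h = -h) :
    let v : ({l : ℤ // 0 < l} ⊕ ℤ) → L :=
      Sum.elim (fun l => ((T l.1 - T (-l.1) : LaurentPolynomial k)) • h)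
        (fun m => (T m : LaurentPolynomial k) • e + (T (-m) : LaurentPolynomial k) • f)
    LinearIndependent k v ∧
      Submodule.span k (Set.range v) = LinearMap.ker (ω - LinearMap.id) :=
  stmt_7_general e f h bas hbas ω hωsmul hωe hωf hωh
end

section
/- In the fixed-point subalgebra L^ω of the sl₂-loop algebra under the Chevalley involution, the elements c_l = (t^l − t^{−l}) ⊗ h and b_m = t^m ⊗ e + t^{−m} ⊗ f satisfy [b_l, b_m] = c_{l−m}, [c_l, b_m] = 2(b_{m+l} − b_{m−l}), and [c_l, c_m] = 0, for all l ∈ ℕ and m ∈ ℤ (with the convention c_{−l} = −c_l, c_0 = 0). -/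
open LaurentPolynomial

/-!
Since the bracket is `k[t,t⁻¹]`-bilinear, `⁅p • x, q • y⁆ = (p * q) • ⁅x, y⁆`, and
`t^a t^b = t^(a+b)`. Expanding the brackets of `b_l`, `b_m`, `c_l` bilinearly therefore reduces
each identity to the `sl₂` relations `[e,f] = h`, `[h,e] = 2e`, `[h,f] = -2f`, `[h,h] = 0`.
-/

section LinearBracket

variable {A L : Type*} [CommRing A] [LieRing L] [Module A L]

theorem lie_smul_of_smul_lie (hsmul : ∀ (p : A) (x y : L), ⁅p • x, y⁆ = p • ⁅x, y⁆)
    (p : A) (x y : L) : ⁅x, p • y⁆ = p • ⁅x, y⁆ := by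
  rw [← lie_skew, hsmul, ← lie_skew x y, smul_neg]

theorem smul_lie_smul_of_smul_lie (hsmul : ∀ (p : A) (x y : L), ⁅p • x, y⁆ = p • ⁅x, y⁆)
    (p q : A) (x y : L) : ⁅p • x, q • y⁆ = (p * q) • ⁅x, y⁆ := by
  rw [hsmul, lie_smul_of_smul_lie hsmul, smul_smul]

end LinearBracket

namespace LoopSl2

variable {k L : Type*} [CommRing k] [LieRing L] [Module k[T;T⁻¹] L]

variable (k) in
noncomputable def c (h : L) (n : ℤ) : L := (T n - T (-n) : k[T;T⁻¹]) • h

variable (k) in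
noncomputable def b (e f : L) (m : ℤ) : L := (T m : k[T;T⁻¹]) • e + (T (-m) : k[T;T⁻¹]) • f

theorem lie_b_b (hsmul : ∀ (p : k[T;T⁻¹]) (x y : L), ⁅p • x, y⁆ = p • ⁅x, y⁆)
    {e f h : L} (hef : ⁅e, f⁆ = h) (l m : ℤ) :
    ⁅b k e f l, b k e f m⁆ = c k h (l - m) := by
  have hfe : ⁅f, e⁆ = -h := by rw [← lie_skew, hef]
  simp only [b, c, lie_add, add_lie, smul_lie_smul_of_smul_lie hsmul, lie_self, hef, hfe,
    ← T_add]
  rw [sub_eq_add_neg l m, neg_add, neg_neg]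
  module

theorem lie_c_c (hsmul : ∀ (p : k[T;T⁻¹]) (x y : L), ⁅p • x, y⁆ = p • ⁅x, y⁆)
    (h : L) (l m : ℤ) : ⁅c k h l, c k h m⁆ = 0 := by
  rw [c, c, smul_lie_smul_of_smul_lie hsmul, lie_self, smul_zero]

theorem lie_c_b [Module k L] [IsScalarTower k k[T;T⁻¹] L]
    (hsmul : ∀ (p : k[T;T⁻¹]) (x y : L), ⁅p • x, y⁆ = p • ⁅x, y⁆)
    {e f h : L} (hhe : ⁅h, e⁆ = (2 : k) • e) (hhf : ⁅h, f⁆ = -((2 : k) • f)) (l m : ℤ) :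
    ⁅c k h l, b k e f m⁆ = (2 : k) • (b k e f (m + l) - b k e f (m - l)) := by
  simp only [b, c, lie_add, smul_lie_smul_of_smul_lie hsmul, hhe, hhf,
    ← algebraMap_smul (A := k[T;T⁻¹]) (2 : k)]
  rw [T_add, T_sub, neg_add, neg_sub', T_add, T_sub, neg_neg]
  module

end LoopSl2

theorem stmt_8_general {k : Type*} [Field k]
    {L : Type*} [LieRing L] [LieAlgebra k L]
    [Module (LaurentPolynomial k) L] [IsScalarTower k (LaurentPolynomial k) L]
    (e f h : L)
    (hsmul : ∀ (p : LaurentPolynomial k) (x y : L), ⁅p • x, y⁆ = p • ⁅x, y⁆)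
    (hef : ⁅e, f⁆ = h) (hhe : ⁅h, e⁆ = (2 : k) • e) (hhf : ⁅h, f⁆ = -((2 : k) • f)) :
    let c : ℤ → L := fun n => ((T n - T (-n) : LaurentPolynomial k)) • h
    let b : ℤ → L := fun m => (T m : LaurentPolynomial k) • e + (T (-m) : LaurentPolynomial k) • f
    ∀ (l : ℕ) (m : ℤ),
      ⁅b (l : ℤ), b m⁆ = c ((l : ℤ) - m) ∧
      ⁅c (l : ℤ), b m⁆ = (2 : k) • (b (m + (l : ℤ)) - b (m - (l : ℤ))) ∧
      ⁅c (l : ℤ), c m⁆ = 0 := fun l m =>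
  ⟨LoopSl2.lie_b_b hsmul hef l m, LoopSl2.lie_c_b hsmul hhe hhf l m,
    LoopSl2.lie_c_c hsmul h l m⟩

/-- In the sl₂-loop algebra `L = sl₂ ⊗ k[t,t⁻¹]` (here axiomatized as the free
`k[t,t⁻¹]`-module on the standard basis `e, f, h` of `sl₂`, with `k[t,t⁻¹]`-bilinear
bracket), the elements `c_l = (t^l - t^{-l}) ⊗ h` and `b_m = t^m ⊗ e + t^{-m} ⊗ f` satisfy
`[b_l, b_m] = c_{l-m}`, `[c_l, b_m] = 2(b_{m+l} - b_{m-l})` and `[c_l, c_m] = 0`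
for all `l ∈ ℕ`, `m ∈ ℤ`. -/
theorem stmt_8 {k : Type*} [Field k] [CharZero k]
    {L : Type*} [LieRing L] [LieAlgebra k L]
    [Module (LaurentPolynomial k) L] [IsScalarTower k (LaurentPolynomial k) L]
    (e f h : L)
    (bas : Module.Basis (Fin 3) (LaurentPolynomial k) L)
    (hbas : bas 0 = e ∧ bas 1 = f ∧ bas 2 = h)
    (hsmul : ∀ (p : LaurentPolynomial k) (x y : L), ⁅p • x, y⁆ = p • ⁅x, y⁆)
    (hef : ⁅e, f⁆ = h) (hhe : ⁅h, e⁆ = (2 : k) • e) (hhf : ⁅h, f⁆ = -((2 : k) • f)) :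
    let c : ℤ → L := fun n => ((T n - T (-n) : LaurentPolynomial k)) • h
    let b : ℤ → L := fun m => (T m : LaurentPolynomial k) • e + (T (-m) : LaurentPolynomial k) • f
    ∀ (l : ℕ) (m : ℤ),
      ⁅b (l : ℤ), b m⁆ = c ((l : ℤ) - m) ∧
      ⁅c (l : ℤ), b m⁆ = (2 : k) • (b (m + (l : ℤ)) - b (m - (l : ℤ))) ∧
      ⁅c (l : ℤ), c m⁆ = 0 :=
  stmt_8_general e f h hsmul hef hhe hhf
end

section
/- If P(t) and Q(t) are reciprocal polynomials in k[t], then I_{P(t)} ∩ I_{Q(t)} = I_{lcm(P(t),Q(t))}, where I_{R(t)} denotes the set of elements of L^ω divisible by R(t) in L. -/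
open LaurentPolynomial

/-- A nonzero monic polynomial `P(t)` of degree `d` is reciprocal if
`P(t) = ± t^d P(t⁻¹)` (as Laurent polynomials). -/
def IsReciprocalPoly {k : Type*} [Field k] (P : Polynomial k) : Prop :=
  P.Monic ∧
    (P.toLaurent = T (P.natDegree : ℤ) * invert P.toLaurent ∨
      P.toLaurent = -(T (P.natDegree : ℤ) * invert P.toLaurent))

/-!
Divisibility of `x = ∑ xᵢ • bᵢ` by `R` in the free `k[t,t⁻¹]`-module `L` is divisibility of each
coordinate `xᵢ`, while the condition `ω x = x` is common to all three sets. A reciprocal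
polynomial is `± t^d P(t⁻¹)`, so its constant term is `±1`; hence it is coprime to `t`, and such a
polynomial dividing a Laurent polynomial `p · t⁻ⁿ` already divides `p` in `k[t]`. Both `P` and `Q`
then divide `p` in `k[t]`, so their lcm `R` does, and divisibility by `R` follows in `k[t,t⁻¹]`.
-/

open Polynomial

theorem Module.Basis.exists_eq_smul_iff_forall_dvd_repr {ι R M : Type*} [Fintype ι] [Semiring R]
    [AddCommMonoid M] [Module R M] (b : Module.Basis ι R M) (r : R) (x : M) :
    (∃ y, x = r • y) ↔ ∀ i, r ∣ b.repr x i := by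
  constructor
  · rintro ⟨y, rfl⟩ i
    exact ⟨b.repr y i, by rw [map_smul, Finsupp.smul_apply, smul_eq_mul]⟩
  · intro hdvd
    choose c hc using hdvd
    refine ⟨∑ i, c i • b i, ?_⟩
    calc x = ∑ i, b.repr x i • b i := (b.sum_repr x).symm
      _ = r • ∑ i, c i • b i := by simp only [hc, mul_smul, Finset.smul_sum]

section Reciprocal

variable {k : Type*} [Field k]

theorem IsReciprocalPoly.eq_reverse_or_eq_neg_reverse {P : k[X]} (hP : IsReciprocalPoly P) :
    P = P.reverse ∨ P = -P.reverse := by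
  refine hP.2.imp (fun h => ?_) (fun h => ?_) <;> apply toLaurent_injective
  · rw [toLaurent_reverse, mul_comm, ← h]
  · rw [map_neg, toLaurent_reverse, mul_comm, ← h]

theorem IsReciprocalPoly.coeff_zero_ne_zero {P : k[X]} (hP : IsReciprocalPoly P) :
    P.coeff 0 ≠ 0 := by
  rcases hP.eq_reverse_or_eq_neg_reverse with h | h <;> rw [h] <;>
    simp [coeff_zero_reverse, hP.1.leadingCoeff]

theorem Polynomial.dvd_of_toLaurent_dvd_toLaurent {P p : k[X]} (hP : P.coeff 0 ≠ 0)
    (h : toLaurent P ∣ toLaurent p) : P ∣ p := by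
  obtain ⟨c, hc⟩ := h
  obtain ⟨m, q, hq⟩ := c.exists_T_pow
  have hXp : X ^ m * p = P * q := by
    apply toLaurent_injective
    rw [map_mul, map_mul, toLaurent_X_pow, hq, T_mul, hc, mul_assoc]
  have hcop : IsCoprime P (X ^ m) :=
    ((prime_X.coprime_iff_not_dvd.mpr (by rwa [X_dvd_iff])).symm).pow_right
  exact hcop.dvd_of_dvd_mul_left ⟨q, hXp⟩

theorem Polynomial.toLaurent_dvd_iff_of_isLcm {P Q R : k[X]} (hP : P.coeff 0 ≠ 0)
    (hQ : Q.coeff 0 ≠ 0) (hPR : P ∣ R) (hQR : Q ∣ R) (hR : ∀ S, P ∣ S → Q ∣ S → R ∣ S)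
    (a : k[T;T⁻¹]) :
    toLaurent R ∣ a ↔ toLaurent P ∣ a ∧ toLaurent Q ∣ a := by
  refine ⟨fun hRa => ⟨(_root_.map_dvd toLaurent hPR).trans hRa,
    (_root_.map_dvd toLaurent hQR).trans hRa⟩, ?_⟩
  rintro ⟨hPa, hQa⟩
  obtain ⟨n, p, hp⟩ := a.exists_T_pow
  rw [← (isUnit_T (n : ℤ)).dvd_mul_right] at hPa hQa ⊢
  rw [← hp] at hPa hQa ⊢
  exact _root_.map_dvd toLaurent (hR p (dvd_of_toLaurent_dvd_toLaurent hP hPa)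
    (dvd_of_toLaurent_dvd_toLaurent hQ hQa))

end Reciprocal

theorem stmt_12_general {k : Type*} [Field k]
    {L : Type*} [LieRing L] [LieAlgebra k L]
    [Module (LaurentPolynomial k) L]
    (bas : Module.Basis (Fin 3) (LaurentPolynomial k) L)
    (ω : L →ₗ[k] L)
    (P Q : Polynomial k) (hP : IsReciprocalPoly P) (hQ : IsReciprocalPoly Q)
    (R : Polynomial k)
    (hRdvd : P ∣ R ∧ Q ∣ R)
    (hRlcm : ∀ S : Polynomial k, P ∣ S → Q ∣ S → R ∣ S) :
    {x : L | ω x = x ∧ ∃ α : L, x = P.toLaurent • α} ∩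
        {x : L | ω x = x ∧ ∃ α : L, x = Q.toLaurent • α} =
      {x : L | ω x = x ∧ ∃ α : L, x = R.toLaurent • α} := by
  ext x
  simp only [Set.mem_inter_iff, Set.mem_ofPred_eq, bas.exists_eq_smul_iff_forall_dvd_repr,
    toLaurent_dvd_iff_of_isLcm hP.coeff_zero_ne_zero hQ.coeff_zero_ne_zero hRdvd.1 hRdvd.2 hRlcm,
    forall_and]
  tauto

/-- If `P(t)` and `Q(t)` are reciprocal polynomials in `k[t]` and `R(t)` is their (monic)
least common multiple, then `I_{P(t)} ∩ I_{Q(t)} = I_{R(t)}`, where `I_{S(t)}` is the set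
of elements of the fixed-point subalgebra `L^ω` of the sl₂-loop algebra `L` (axiomatized
as the free `k[t,t⁻¹]`-module on `e, f, h` with Chevalley involution `ω`) divisible by
`S(t)` in `L`. -/
theorem stmt_12 {k : Type*} [Field k] [IsAlgClosed k] [CharZero k]
    {L : Type*} [LieRing L] [LieAlgebra k L]
    [Module (LaurentPolynomial k) L] [IsScalarTower k (LaurentPolynomial k) L]
    (e f h : L)
    (bas : Module.Basis (Fin 3) (LaurentPolynomial k) L)
    (hbas : bas 0 = e ∧ bas 1 = f ∧ bas 2 = h)
    (hsmul : ∀ (p : LaurentPolynomial k) (x y : L), ⁅p • x, y⁆ = p • ⁅x, y⁆)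
    (hef : ⁅e, f⁆ = h) (hhe : ⁅h, e⁆ = (2 : k) • e) (hhf : ⁅h, f⁆ = -((2 : k) • f))
    (ω : L →ₗ[k] L)
    (hωsmul : ∀ (p : LaurentPolynomial k) (x : L), ω (p • x) = invert p • ω x)
    (hωe : ω e = f) (hωf : ω f = e) (hωh : ω h = -h)
    (P Q : Polynomial k) (hP : IsReciprocalPoly P) (hQ : IsReciprocalPoly Q)
    (R : Polynomial k) (hRmonic : R.Monic)
    (hRdvd : P ∣ R ∧ Q ∣ R)
    (hRlcm : ∀ S : Polynomial k, P ∣ S → Q ∣ S → R ∣ S) :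
    {x : L | ω x = x ∧ ∃ α : L, x = P.toLaurent • α} ∩
        {x : L | ω x = x ∧ ∃ α : L, x = Q.toLaurent • α} =
      {x : L | ω x = x ∧ ∃ α : L, x = R.toLaurent • α} :=
  stmt_12_general bas ω P Q hP hQ R hRdvd hRlcm
end

section
/- If J is any nontrivial ideal of the Onsager algebra O = O_A ⊕ O_G (where O_A = span{A_m} and O_G = span{G_l}), then J ∩ O_A ≠ {0}. -/
/-!
Pick `x ≠ 0` in `J` and let `c_n` be its `A_n`-coordinates. Since the `G_l` commute, `ad G₁` maps
all of `O` into `O_A`, and the `A_n`-coordinate of `⁅G₁, x⁆` is `c_{n-1} - c_{n+1}`. So if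
`⁅G₁, x⁆ = 0`, then `c` is `2`-periodic and finitely supported, hence zero, and `x ∈ O_G`.
Then `⁅A₀, x⁆ ∈ O_A`, and for `l > 0` its `A_l`-coordinate is minus the `G_l`-coordinate of `x`,
so `⁅A₀, x⁆ ≠ 0`.
-/

open Set Submodule

theorem Function.Periodic.eq_zero_of_hasFiniteSupport {M : Type*} [Zero M] {f : ℤ → M} {p : ℤ}
    (hf : Function.Periodic f p) (hp : 0 < p) (hs : f.HasFiniteSupport) : f = 0 := by
  obtain ⟨B, hB⟩ := hs.bddAbove
  funext m
  by_contra hm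
  have hshift : m + (|B - m| + 1) * p ∈ f.support := by
    have hperiod := hf.int_mul (|B - m| + 1) m
    rw [Int.cast_id] at hperiod
    rw [Function.mem_support, hperiod]
    exact hm
  nlinarith [hB hshift, le_abs_self (B - m), abs_nonneg (B - m)]

namespace Onsager

variable {k O : Type*} [CommRing k] [LieRing O] [LieAlgebra k O] {A G : ℤ → O}
  {bas : Module.Basis (ℤ ⊕ {l : ℤ // 0 < l}) k O}

theorem basis_inl_mem_span_A (hbas : ∀ i, bas i = Sum.elim A (fun l => G l.1) i) (m : ℤ) :
    bas (.inl m) ∈ span k (range A) := by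
  rw [hbas]
  exact subset_span ⟨m, rfl⟩

theorem lie_G_one_basis_inl (hbas : ∀ i, bas i = Sum.elim A (fun l => G l.1) i)
    (hGA : ∀ l m : ℤ, 0 < l → ⁅G l, A m⁆ = A (m + l) - A (m - l)) (m : ℤ) :
    ⁅G 1, bas (.inl m)⁆ = bas (.inl (m + 1)) - bas (.inl (m - 1)) := by
  simp only [hbas, Sum.elim_inl, hGA 1 m one_pos]

theorem lie_G_one_basis_inr (hbas : ∀ i, bas i = Sum.elim A (fun l => G l.1) i)
    (hGG : ∀ l m : ℤ, 0 < l → 0 < m → ⁅G l, G m⁆ = 0) (l : {l : ℤ // 0 < l}) :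
    ⁅G 1, bas (.inr l)⁆ = 0 := by
  rw [hbas, Sum.elim_inr, hGG 1 l one_pos l.2]

theorem lie_A_zero_basis_inr (hbas : ∀ i, bas i = Sum.elim A (fun l => G l.1) i)
    (hGA : ∀ l m : ℤ, 0 < l → ⁅G l, A m⁆ = A (m + l) - A (m - l)) (l : {l : ℤ // 0 < l}) :
    ⁅A 0, bas (.inr l)⁆ = bas (.inl (-l)) - bas (.inl l) := by
  simp only [hbas, Sum.elim_inl, Sum.elim_inr]
  rw [← lie_skew, hGA l 0 l.2, zero_add, zero_sub, neg_sub]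

theorem lie_G_one_mem_span_A (hbas : ∀ i, bas i = Sum.elim A (fun l => G l.1) i)
    (hGA : ∀ l m : ℤ, 0 < l → ⁅G l, A m⁆ = A (m + l) - A (m - l))
    (hGG : ∀ l m : ℤ, 0 < l → 0 < m → ⁅G l, G m⁆ = 0) (x : O) :
    ⁅G 1, x⁆ ∈ span k (range A) := by
  have hgen : range bas ⊆ (span k (range A)).comap (LieAlgebra.ad k O (G 1)) := by
    rintro _ ⟨m | l, rfl⟩
    · rw [SetLike.mem_coe, mem_comap, LieAlgebra.ad_apply, lie_G_one_basis_inl hbas hGA]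
      exact sub_mem (basis_inl_mem_span_A hbas _) (basis_inl_mem_span_A hbas _)
    · rw [SetLike.mem_coe, mem_comap, LieAlgebra.ad_apply, lie_G_one_basis_inr hbas hGG]
      exact zero_mem _
  exact span_le.2 hgen (bas.mem_span x)

theorem lie_A_zero_mem_span_A (hbas : ∀ i, bas i = Sum.elim A (fun l => G l.1) i)
    (hGA : ∀ l m : ℤ, 0 < l → ⁅G l, A m⁆ = A (m + l) - A (m - l))
    {x : O} (hx : x ∈ span k (bas '' range Sum.inr)) :
    ⁅A 0, x⁆ ∈ span k (range A) := by
  have hgen : bas '' range Sum.inr ⊆ (span k (range A)).comap (LieAlgebra.ad k O (A 0)) := by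
    rintro _ ⟨_, ⟨l, rfl⟩, rfl⟩
    rw [SetLike.mem_coe, mem_comap, LieAlgebra.ad_apply, lie_A_zero_basis_inr hbas hGA]
    exact sub_mem (basis_inl_mem_span_A hbas _) (basis_inl_mem_span_A hbas _)
  exact span_le.2 hgen hx

theorem repr_lie_G_one_inl (hbas : ∀ i, bas i = Sum.elim A (fun l => G l.1) i)
    (hGA : ∀ l m : ℤ, 0 < l → ⁅G l, A m⁆ = A (m + l) - A (m - l))
    (hGG : ∀ l m : ℤ, 0 < l → 0 < m → ⁅G l, G m⁆ = 0) (x : O) (n : ℤ) :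
    bas.repr ⁅G 1, x⁆ (.inl n) = bas.repr x (.inl (n - 1)) - bas.repr x (.inl (n + 1)) := by
  have h : (bas.coord (.inl n)).comp (LieAlgebra.ad k O (G 1))
      = bas.coord (.inl (n - 1)) - bas.coord (.inl (n + 1)) := by
    refine bas.ext fun i => ?_
    rcases i with m | l
    · simp only [LinearMap.comp_apply, LieAlgebra.ad_apply, lie_G_one_basis_inl hbas hGA,
        LinearMap.sub_apply, Module.Basis.coord_apply, map_sub, Module.Basis.repr_self,
        Finsupp.single_apply, Sum.inl.injEq,
        show m + 1 = n ↔ m = n - 1 by omega, show m - 1 = n ↔ m = n + 1 by omega]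
    · simp [lie_G_one_basis_inr hbas hGG]
  exact LinearMap.congr_fun h x

theorem repr_lie_A_zero_inl (hbas : ∀ i, bas i = Sum.elim A (fun l => G l.1) i)
    (hGA : ∀ l m : ℤ, 0 < l → ⁅G l, A m⁆ = A (m + l) - A (m - l))
    {x : O} (hx : x ∈ span k (bas '' range Sum.inr)) (l : {l : ℤ // 0 < l}) :
    bas.repr ⁅A 0, x⁆ (.inl l) = -bas.repr x (.inr l) := by
  refine LinearMap.eqOn_span' (f := (bas.coord (.inl l)).comp (LieAlgebra.ad k O (A 0)))
    (g := -bas.coord (.inr l)) ?_ hx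
  rintro _ ⟨_, ⟨l', rfl⟩, rfl⟩
  simp only [LinearMap.comp_apply, LieAlgebra.ad_apply, lie_A_zero_basis_inr hbas hGA,
    LinearMap.neg_apply, Module.Basis.coord_apply, map_sub, Module.Basis.repr_self,
    Finsupp.single_apply, Sum.inl.injEq, Sum.inr.injEq, Subtype.ext_iff,
    sub_eq_neg_self, ite_eq_right_iff]
  have := l.2
  have := l'.2
  omega

theorem mem_span_G_of_lie_G_one_eq_zero (hbas : ∀ i, bas i = Sum.elim A (fun l => G l.1) i)
    (hGA : ∀ l m : ℤ, 0 < l → ⁅G l, A m⁆ = A (m + l) - A (m - l))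
    (hGG : ∀ l m : ℤ, 0 < l → 0 < m → ⁅G l, G m⁆ = 0) {x : O} (h : ⁅G 1, x⁆ = 0) :
    x ∈ span k (bas '' range Sum.inr) := by
  have hper : Function.Periodic (fun m => bas.repr x (.inl m)) 2 := fun m => by
    have hrepr := repr_lie_G_one_inl hbas hGA hGG x (m + 1)
    rw [h, map_zero, Finsupp.zero_apply, add_sub_cancel_right, add_assoc, one_add_one_eq_two,
      eq_comm, sub_eq_zero] at hrepr
    exact hrepr.symm
  have hcoordA := hper.eq_zero_of_hasFiniteSupport two_pos
    ((bas.repr x).hasFiniteSupport.comp_of_injective Sum.inl_injective)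
  rw [bas.mem_span_image]
  rintro (m | l) hi
  · exact absurd (congr_fun hcoordA m) (Finsupp.mem_support_iff.1 hi)
  · exact ⟨l, rfl⟩

end Onsager

open Onsager in
theorem stmt_17_general {k : Type*} [Field k]
    {O : Type*} [LieRing O] [LieAlgebra k O]
    (A G : ℤ → O)
    (bas : Module.Basis (ℤ ⊕ {l : ℤ // 0 < l}) k O)
    (hbas : ∀ i, bas i = Sum.elim A (fun l => G l.1) i)
    (hGA : ∀ l m : ℤ, 0 < l → ⁅G l, A m⁆ = A (m + l) - A (m - l))
    (hGG : ∀ l m : ℤ, 0 < l → 0 < m → ⁅G l, G m⁆ = 0)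
    (J : LieIdeal k O) (hJ : J ≠ ⊥) :
    ∃ x : O, x ∈ J ∧ x ∈ Submodule.span k (Set.range A) ∧ x ≠ 0 := by
  obtain ⟨x, hxJ, hx0⟩ := Submodule.exists_mem_ne_zero_of_ne_bot
    (p := (J : Submodule k O)) (by simpa using hJ)
  by_cases h : ⁅G 1, x⁆ = 0
  · have hxG := mem_span_G_of_lie_G_one_eq_zero hbas hGA hGG h
    obtain ⟨i, hi⟩ : (bas.repr x).support.Nonempty := by simpa using hx0
    obtain ⟨l, rfl⟩ := bas.mem_span_image.1 hxG hi
    refine ⟨⁅A 0, x⁆, J.lie_mem hxJ, lie_A_zero_mem_span_A hbas hGA hxG, fun h0 => ?_⟩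
    refine Finsupp.mem_support_iff.1 hi ?_
    simpa [h0] using (repr_lie_A_zero_inl hbas hGA hxG l).symm
  · exact ⟨_, J.lie_mem hxJ, lie_G_one_mem_span_A hbas hGA hGG x, h⟩

/-- If `J` is any nontrivial ideal of the Onsager algebra `O = O_A ⊕ O_G`
(where `O_A = span{A_m}` and `O_G = span{G_l}`), then `J ∩ O_A ≠ {0}`. -/
theorem stmt_17 {k : Type*} [Field k] [CharZero k]
    {O : Type*} [LieRing O] [LieAlgebra k O]
    (A G : ℤ → O)
    (bas : Module.Basis (ℤ ⊕ {l : ℤ // 0 < l}) k O)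
    (hbas : ∀ i, bas i = Sum.elim A (fun l => G l.1) i)
    (hG0 : G 0 = 0) (hGneg : ∀ m : ℤ, G (-m) = -G m)
    (hAA : ∀ l m : ℤ, m < l → ⁅A l, A m⁆ = (2 : k) • G (l - m))
    (hGA : ∀ l m : ℤ, 0 < l → ⁅G l, A m⁆ = A (m + l) - A (m - l))
    (hGG : ∀ l m : ℤ, 0 < l → 0 < m → ⁅G l, G m⁆ = 0)
    (J : LieIdeal k O) (hJ : J ≠ ⊥) :
    ∃ x : O, x ∈ J ∧ x ∈ Submodule.span k (Set.range A) ∧ x ≠ 0 :=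
  stmt_17_general A G bas hbas hGA hGG J hJ
end

section
/- Let B be the 6-dimensional Lie algebra over k spanned by the classes of v₀t, v₁t, v₂t, v₀(t−1), v₁(t−1), v₂(t−1) in O/Ot(t−1), where O = v₀k[t] ⊕ v₁k[t] ⊕ v₂k[t] with k[t]-linear brackets [v₀,v₁] = −v₂(t−1), [v₁,v₂] = −v₀, [v₂,v₀] = v₁t. Then B is solvable (its second derived algebra vanishes) but not nilpotent (its lower central series stabilizes at a nonzero ideal). -/
/-!
Every bracket of `O` lies in `S = k[t]v₀ + k[t]tv₁ + k[t](t-1)v₂`, and `[S, S] ⊆ t(t-1)O`, so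
`[B, B]` lies in the abelian image of `S` and `B` is metabelian. Modulo `t(t-1)` the image of `S`
is spanned by `tv₀, tv₁, (t-1)v₀, (t-1)v₂`, and `ad z` for `z = tv₂ + (t-1)v₁` swaps
`tv₀ ↔ tv₁` and `(t-1)v₀ ↔ (t-1)v₂`. Hence `[B, B] = [z, [z, [B, B]]] ⊆ [B, [B, B]]`, and
`[B, B] ≠ 0` because `[v₂, v₀] = tv₁ ∉ t(t-1)O`.
-/

open Polynomial

open Pointwise

namespace LieModule

variable {R L M : Type*} [CommRing R] [LieRing L] [LieAlgebra R L] [AddCommGroup M] [Module R M]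
  [LieRingModule L M]

theorem lowerCentralSeries_two_eq_one_of_lie_lie (z : L)
    (h : ∀ (x : L) (m : M), ⁅z, ⁅z, ⁅x, m⁆⁆⁆ = ⁅x, m⁆) :
    lowerCentralSeries R L M 2 = lowerCentralSeries R L M 1 := by
  refine le_antisymm (antitone_lowerCentralSeries R L M one_le_two) ?_
  rw [lowerCentralSeries_succ, lowerCentralSeries_zero, LieSubmodule.lie_le_iff]
  rintro x - m -
  have h1 : ⁅z, ⁅x, m⁆⁆ ∈ lowerCentralSeries R L M 1 := by
    rw [lowerCentralSeries_succ, lowerCentralSeries_zero]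
    exact LieSubmodule.lie_mem_lie (LieSubmodule.mem_top z) (LieSubmodule.mem_top _)
  rw [← h x m, lowerCentralSeries_succ]
  exact LieSubmodule.lie_mem_lie (LieSubmodule.mem_top z) h1

theorem lowerCentralSeries_succ_eq_one
    (h : lowerCentralSeries R L M 2 = lowerCentralSeries R L M 1) (n : ℕ) :
    lowerCentralSeries R L M (n + 1) = lowerCentralSeries R L M 1 := by
  induction n with
  | zero => rfl
  | succ n ih => rw [lowerCentralSeries_succ, ih, ← lowerCentralSeries_succ, h]

theorem not_isNilpotent_of_lowerCentralSeries_two_eq_one [LieModule R L M]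
    (h : lowerCentralSeries R L M 2 = lowerCentralSeries R L M 1)
    (hne : lowerCentralSeries R L M 1 ≠ ⊥) : ¬IsNilpotent L M := by
  intro hM
  obtain ⟨n, hn⟩ := (isNilpotent_iff R L M).1 hM
  refine hne (eq_bot_iff.2 ?_)
  rw [← lowerCentralSeries_succ_eq_one h n, ← hn]
  exact antitone_lowerCentralSeries R L M n.le_succ

end LieModule

namespace LieAlgebra

variable {R L : Type*} [CommRing R] [LieRing L]

abbrev ofSmulLie [Module R L] (h : ∀ (t : R) (x y : L), ⁅t • x, y⁆ = t • ⁅x, y⁆) :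
    LieAlgebra R L where
  lie_smul t x y := by rw [← lie_skew, h, ← smul_neg, lie_skew]

variable [LieAlgebra R L]

theorem lie_mem_of_mem_span {s t : Set L} {N : Submodule R L} (h : ∀ a ∈ s, ∀ b ∈ t, ⁅a, b⁆ ∈ N)
    {x y : L} (hx : x ∈ Submodule.span R s) (hy : y ∈ Submodule.span R t) : ⁅x, y⁆ ∈ N := by
  have hle : Submodule.map₂ (LieModule.toEnd R L L : L →ₗ[R] Module.End R L)
      (Submodule.span R s) (Submodule.span R t) ≤ N := by
    rw [Submodule.map₂_span_span, Submodule.span_le]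
    rintro _ ⟨a, ha, b, hb, rfl⟩
    exact h a ha b hb
  exact hle (Submodule.apply_mem_map₂ _ hx hy)

theorem derivedSeries_two_eq_bot_of_lie_mem (V : Submodule R L) (hV : ∀ x y : L, ⁅x, y⁆ ∈ V)
    (hVV : ∀ x ∈ V, ∀ y ∈ V, ⁅x, y⁆ = 0) : derivedSeries R L 2 = ⊥ := by
  have h1 : ∀ x ∈ derivedSeries R L 1, x ∈ V := by
    intro x hx
    rw [derivedSeries_def, derivedSeriesOfIdeal_succ, derivedSeriesOfIdeal_zero,
      ← LieSubmodule.mem_toSubmodule, LieSubmodule.lieIdeal_oper_eq_linear_span'] at hx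
    refine Submodule.span_le.2 ?_ hx
    rintro _ ⟨x, -, y, -, rfl⟩
    exact hV x y
  rw [derivedSeries_def, derivedSeriesOfIdeal_succ, ← derivedSeries_def,
    LieSubmodule.lie_eq_bot_iff]
  exact fun x hx y hy ↦ hVV x (h1 x hx) y (h1 y hy)

end LieAlgebra

theorem Module.Basis.smul_ne_smul_of_not_dvd {ι A M : Type*} [CommRing A] [AddCommGroup M]
    [Module A M] (b : Module.Basis ι A M) {p q : A} (h : ¬q ∣ p) (i : ι) (y : M) :
    p • b i ≠ q • y := by
  intro hy
  have := congrArg (fun x ↦ b.repr x i) hy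
  simp only [map_smul, Finsupp.smul_apply, repr_self, Finsupp.single_eq_same, smul_eq_mul,
    mul_one] at this
  exact h ⟨_, this⟩

namespace Onsager

open Submodule

variable {R O : Type*} [CommRing R] [LieRing O] [LieAlgebra R[X] O] {v : Fin 3 → O}

theorem lowerCentralSeries_quotient_one_ne_bot [Nontrivial R] [LieAlgebra R O]
    (b : Module.Basis (Fin 3) R[X] O) (hb : ∀ i, b i = v i)
    (h20 : ⁅v 2, v 0⁆ = (X : R[X]) • v 1) (I : LieIdeal R O)
    (hI : ∀ x ∈ I, x ∈ (X * (X - 1) : R[X]) • (⊤ : Submodule R[X] O)) :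
    LieModule.lowerCentralSeries R (O ⧸ I) (O ⧸ I) 1 ≠ ⊥ := by
  intro hbot
  have htriv := (LieModule.trivial_iff_lower_central_eq_bot R (O ⧸ I) (O ⧸ I)).2 hbot
  have h := htriv.trivial (LieSubmodule.Quotient.mk (v 2)) (LieSubmodule.Quotient.mk (v 0))
  rw [← LieSubmodule.Quotient.mk_bracket, h20, LieSubmodule.Quotient.mk_eq_zero'] at h
  obtain ⟨y, -, hy⟩ := (mem_smul_pointwise_iff_exists _ _ _).1 (hI _ h)
  refine b.smul_ne_smul_of_not_dvd (fun hdvd ↦ ?_) 1 y (hb 1 ▸ hy.symm)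
  simpa using eval_dvd (x := (1 : R)) hdvd

section

variable (h01 : ⁅v 0, v 1⁆ = -((X - 1 : R[X]) • v 2)) (h12 : ⁅v 1, v 2⁆ = -v 0)
  (h20 : ⁅v 2, v 0⁆ = (X : R[X]) • v 1)
include h01 h12 h20

theorem lie_mem_span (hv : span R[X] (Set.range v) = ⊤) (x y : O) :
    ⁅x, y⁆ ∈ span R[X] {v 0, (X : R[X]) • v 1, (X - 1 : R[X]) • v 2} := by
  refine LieAlgebra.lie_mem_of_mem_span ?_ (hv ▸ mem_top) (hv ▸ mem_top)
  rintro _ ⟨i, rfl⟩ _ ⟨j, rfl⟩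
  fin_cases i <;> fin_cases j <;>
    simp only [Fin.zero_eta, Fin.mk_one, Fin.reduceFinMk, lie_self, h01, h12, h20,
      ← lie_skew (v 1) (v 0), ← lie_skew (v 2) (v 1), ← lie_skew (v 0) (v 2), neg_neg] <;>
    first
    | exact zero_mem _
    | exact neg_mem (subset_span (by simp))
    | exact subset_span (by simp)

theorem lie_mem_smul_top {x y : O}
    (hx : x ∈ span R[X] {v 0, (X : R[X]) • v 1, (X - 1 : R[X]) • v 2})
    (hy : y ∈ span R[X] {v 0, (X : R[X]) • v 1, (X - 1 : R[X]) • v 2}) :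
    ⁅x, y⁆ ∈ (X * (X - 1) : R[X]) • (⊤ : Submodule R[X] O) := by
  refine LieAlgebra.lie_mem_of_mem_span ?_ hx hy
  simp only [mem_smul_pointwise_iff_exists, mem_top, true_and]
  rintro a (rfl | rfl | rfl) b (rfl | rfl | rfl) <;>
    simp only [smul_lie, lie_smul, lie_self, h01, h12, h20, ← lie_skew (v 1) (v 0),
      ← lie_skew (v 2) (v 1), ← lie_skew (v 0) (v 2)]
  exacts [⟨0, smul_zero _⟩, ⟨-v 2, by module⟩, ⟨-v 1, by module⟩, ⟨v 2, by module⟩,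
    ⟨0, smul_zero _⟩, ⟨-v 0, by module⟩, ⟨v 1, by module⟩, ⟨v 0, by module⟩, ⟨0, smul_zero _⟩]

theorem lie_lie_sub_mem_smul_top {s : O}
    (hs : s ∈ span R[X] {v 0, (X : R[X]) • v 1, (X - 1 : R[X]) • v 2}) :
    ⁅(X : R[X]) • v 2 + (X - 1 : R[X]) • v 1, ⁅(X : R[X]) • v 2 + (X - 1 : R[X]) • v 1, s⁆⁆ - s
      ∈ (X * (X - 1) : R[X]) • (⊤ : Submodule R[X] O) := by
  set z := (X : R[X]) • v 2 + (X - 1 : R[X]) • v 1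
  have hS : s ∈ ((X * (X - 1) : R[X]) • (⊤ : Submodule R[X] O)).comap
      (LieAlgebra.ad R[X] O z ^ 2 - 1) := by
    refine span_le.2 ?_ hs
    simp only [Set.insert_subset_iff, Set.singleton_subset_iff, SetLike.mem_coe, mem_comap,
      mem_smul_pointwise_iff_exists, mem_top, true_and, sq, Module.End.mul_apply,
      LieAlgebra.ad_apply, LinearMap.sub_apply, Module.End.one_apply, z, lie_add, add_lie,
      lie_neg, neg_neg, smul_zero, add_zero, zero_add, smul_lie, lie_smul, lie_self, h01, h12,
      h20, ← lie_skew (v 1) (v 0), ← lie_skew (v 2) (v 1)]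
    -- `t³ - (t-1)³ - 1 = 3t(t-1)`, `t⁴ - t = t(t-1)(t²+t+1)`, `(t-1)⁴ + (t-1) = t(t-1)(t²-3t+3)`
    exact ⟨⟨(3 : R[X]) • v 0, by module⟩,
      ⟨(X ^ 2 + X + 1 : R[X]) • v 1 + (X * (X - 1) : R[X]) • v 2, by module⟩,
      ⟨-((X - 1) * X : R[X]) • v 1 - (X ^ 2 - 3 * X + 3 : R[X]) • v 2, by module⟩⟩
  simpa only [mem_comap, LinearMap.sub_apply, sq, Module.End.mul_apply, LieAlgebra.ad_apply,
    Module.End.one_apply] using hS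

theorem derivedSeries_quotient_two_eq_bot [LieAlgebra R O] [IsScalarTower R R[X] O]
    (hv : span R[X] (Set.range v) = ⊤) (I : LieIdeal R O)
    (hI : ∀ x ∈ (X * (X - 1) : R[X]) • (⊤ : Submodule R[X] O), x ∈ I) :
    LieAlgebra.derivedSeries R (O ⧸ I) 2 = ⊥ := by
  refine LieAlgebra.derivedSeries_two_eq_bot_of_lie_mem
    (((span R[X] {v 0, (X : R[X]) • v 1, (X - 1 : R[X]) • v 2}).restrictScalars R).map
      (LieSubmodule.Quotient.mk' I : O →ₗ[R] O ⧸ I)) ?_ ?_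
  · intro x y
    obtain ⟨a, rfl⟩ := Submodule.Quotient.mk_surjective _ x
    obtain ⟨b, rfl⟩ := Submodule.Quotient.mk_surjective _ y
    exact ⟨⁅a, b⁆, lie_mem_span h01 h12 h20 hv a b, rfl⟩
  · rintro _ ⟨a, ha, rfl⟩ _ ⟨b, hb, rfl⟩
    rw [LieModuleHom.coe_toLinearMap, LieSubmodule.Quotient.mk'_apply,
      LieSubmodule.Quotient.mk'_apply, ← LieSubmodule.Quotient.mk_bracket,
      LieSubmodule.Quotient.mk_eq_zero']
    exact hI _ (lie_mem_smul_top h01 h12 h20 ha hb)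

theorem lowerCentralSeries_quotient_two_eq_one [LieAlgebra R O]
    (hv : span R[X] (Set.range v) = ⊤) (I : LieIdeal R O)
    (hI : ∀ x ∈ (X * (X - 1) : R[X]) • (⊤ : Submodule R[X] O), x ∈ I) :
    LieModule.lowerCentralSeries R (O ⧸ I) (O ⧸ I) 2 =
      LieModule.lowerCentralSeries R (O ⧸ I) (O ⧸ I) 1 := by
  refine LieModule.lowerCentralSeries_two_eq_one_of_lie_lie
    (LieSubmodule.Quotient.mk ((X : R[X]) • v 2 + (X - 1 : R[X]) • v 1)) fun x y ↦ ?_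
  obtain ⟨a, rfl⟩ := Submodule.Quotient.mk_surjective _ x
  obtain ⟨b, rfl⟩ := Submodule.Quotient.mk_surjective _ y
  simp only [← LieSubmodule.Quotient.mk_bracket]
  exact (Submodule.Quotient.eq _).2
    (hI _ (lie_lie_sub_mem_smul_top h01 h12 h20 (lie_mem_span h01 h12 h20 hv a b)))

end

end Onsager

theorem stmt_18_general {k : Type*} [Field k]
    {O : Type*} [LieRing O] [LieAlgebra k O]
    [Module (Polynomial k) O] [IsScalarTower k (Polynomial k) O]
    (v : Fin 3 → O)
    (bas : Module.Basis (Fin 3) (Polynomial k) O) (hbas : ∀ i, bas i = v i)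
    (hsmul : ∀ (p : Polynomial k) (x y : O), ⁅p • x, y⁆ = p • ⁅x, y⁆)
    (h01 : ⁅v 0, v 1⁆ = -(((X : Polynomial k) - 1) • v 2))
    (h12 : ⁅v 1, v 2⁆ = -v 0)
    (h20 : ⁅v 2, v 0⁆ = (X : Polynomial k) • v 1)
    (I : LieIdeal k O)
    (hI : ∀ x : O, x ∈ I ↔ ∃ y : O, x = ((X : Polynomial k) * ((X : Polynomial k) - 1)) • y) :
    LieAlgebra.derivedSeries k (O ⧸ I) 2 = ⊥ ∧
    LieModule.lowerCentralSeries k (O ⧸ I) (O ⧸ I) 2 = LieModule.lowerCentralSeries k (O ⧸ I) (O ⧸ I) 1 ∧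
    LieModule.lowerCentralSeries k (O ⧸ I) (O ⧸ I) 1 ≠ ⊥ ∧
    ¬ LieModule.IsNilpotent (O ⧸ I) (O ⧸ I) := by
  let _ := LieAlgebra.ofSmulLie hsmul
  have hv : Submodule.span k[X] (Set.range v) = ⊤ := funext hbas ▸ bas.span_eq
  have hIJ : ∀ x, x ∈ I ↔ x ∈ (X * (X - 1) : k[X]) • (⊤ : Submodule k[X] O) := by
    simp [hI, Submodule.mem_smul_pointwise_iff_exists, eq_comm]
  have hlcs := Onsager.lowerCentralSeries_quotient_two_eq_one h01 h12 h20 hv I (fun x ↦ (hIJ x).2)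
  have hne := Onsager.lowerCentralSeries_quotient_one_ne_bot bas hbas h20 I (fun x ↦ (hIJ x).1)
  exact ⟨Onsager.derivedSeries_quotient_two_eq_bot h01 h12 h20 hv I (fun x ↦ (hIJ x).2), hlcs, hne,
    LieModule.not_isNilpotent_of_lowerCentralSeries_two_eq_one hlcs hne⟩

/-- Let `O = v₀k[t] ⊕ v₁k[t] ⊕ v₂k[t]` be the realization of the Onsager algebra as the
free `k[t]`-module on `v₀, v₁, v₂` with `k[t]`-bilinear brackets `[v₀,v₁] = -v₂(t-1)`,
`[v₁,v₂] = -v₀`, `[v₂,v₀] = v₁t`, and let `I = O·t(t-1)` be the ideal of elements all of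
whose coordinates are divisible by `t(t-1)`.  Then `B = O ⧸ I` (which is spanned by the
classes of `vᵢt, vᵢ(t-1)`) is solvable — its second derived algebra vanishes — but not
nilpotent: its lower central series stabilizes at the first step at a nonzero ideal. -/
theorem stmt_18 {k : Type*} [Field k] [CharZero k]
    {O : Type*} [LieRing O] [LieAlgebra k O]
    [Module (Polynomial k) O] [IsScalarTower k (Polynomial k) O]
    (v : Fin 3 → O)
    (bas : Module.Basis (Fin 3) (Polynomial k) O) (hbas : ∀ i, bas i = v i)
    (hsmul : ∀ (p : Polynomial k) (x y : O), ⁅p • x, y⁆ = p • ⁅x, y⁆)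
    (h01 : ⁅v 0, v 1⁆ = -(((X : Polynomial k) - 1) • v 2))
    (h12 : ⁅v 1, v 2⁆ = -v 0)
    (h20 : ⁅v 2, v 0⁆ = (X : Polynomial k) • v 1)
    (I : LieIdeal k O)
    (hI : ∀ x : O, x ∈ I ↔ ∃ y : O, x = ((X : Polynomial k) * ((X : Polynomial k) - 1)) • y) :
    LieAlgebra.derivedSeries k (O ⧸ I) 2 = ⊥ ∧
    LieModule.lowerCentralSeries k (O ⧸ I) (O ⧸ I) 2 = LieModule.lowerCentralSeries k (O ⧸ I) (O ⧸ I) 1 ∧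
    LieModule.lowerCentralSeries k (O ⧸ I) (O ⧸ I) 1 ≠ ⊥ ∧
    ¬ LieModule.IsNilpotent (O ⧸ I) (O ⧸ I) :=
  stmt_18_general v bas hbas hsmul h01 h12 h20 I hI
end

section
/- Let I be an ideal of the Onsager algebra O = v₀k[t] ⊕ v₁k[t] ⊕ v₂k[t] (with [v₀,v₁] = −v₂(t−1), [v₁,v₂] = −v₀, [v₂,v₀] = v₁t), and define J_I = {p(t) ∈ k[t] : ∃ p₁, p₂ ∈ k[t], v₀p(t) + v₁p₁(t) + v₂p₂(t) ∈ I}. Then J_I is an ideal of k[t], and O·J_I·t(t−1) ⊆ I ⊆ O·J_I. -/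
open Polynomial

/-!
Bracketing with `v₁` and `v₂` moves the coefficients of `v₀p + v₁p₁ + v₂p₂` between the three
slots, multiplying them by `t` or `t - 1` on the way. Since `I` is stable under these brackets,
`p₁` and `p₂` lie in `J_I`, which gives `I ⊆ O·J_I`; `J_I` is stable under multiplication by `t`,
hence an ideal; and iterated brackets isolate `v_i·t(t-1)p` for each `i`, for instance
`[[[x, v₁], v₁], v₂] = v₁·t(t-1)p` for `x = v₀p + v₁p₁ + v₂p₂`.
-/

theorem Polynomial.mul_mem_of_X_mul_mem {R : Type*} [CommSemiring R] {S : Submodule R R[X]}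
    (hX : ∀ p ∈ S, X * p ∈ S) (f : R[X]) {p : R[X]} (hp : p ∈ S) : f * p ∈ S := by
  induction f using Polynomial.induction_on with
  | C a => simpa [smul_eq_C_mul] using S.smul_mem a hp
  | add f g hf hg => simpa [add_mul] using S.add_mem hf hg
  | monomial n a ih =>
    rw [show C a * X ^ (n + 1) * p = X * (C a * X ^ n * p) by ring]
    exact hX _ ih

namespace Onsager

section Comb

variable {k O : Type*} [CommRing k] [AddCommGroup O] [Module k[X] O] (v : Fin 3 → O)

noncomputable def comb (a b c : k[X]) : O := a • v 0 + b • v 1 + c • v 2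

@[simp]
theorem comb_zero : comb v (0 : k[X]) 0 0 = 0 := by
  simp [comb]

theorem comb_add (a b c a' b' c' : k[X]) :
    comb v a b c + comb v a' b' c' = comb v (a + a') (b + b') (c + c') := by
  simp only [comb]; module

theorem smul_comb {S : Type*} [Monoid S] [MulAction S k[X]] [DistribMulAction S O]
    [IsScalarTower S k[X] O] (r : S) (a b c : k[X]) :
    r • comb v a b c = comb v (r • a) (r • b) (r • c) := by
  simp only [comb, smul_add, smul_assoc]

theorem comb_repr (bas : Module.Basis (Fin 3) k[X] O) (hbas : ∀ i, bas i = v i) (x : O) :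
    comb v (bas.repr x 0) (bas.repr x 1) (bas.repr x 2) = x := by
  conv_rhs => rw [← bas.sum_repr x]
  simp [comb, Fin.sum_univ_three, hbas]

end Comb

structure Relations (k : Type*) {O : Type*} [CommRing k] [LieRing O] [Module k[X] O]
    (v : Fin 3 → O) : Prop where
  lie_smul : ∀ (p : k[X]) (x y : O), ⁅p • x, y⁆ = p • ⁅x, y⁆
  lie_zero_one : ⁅v 0, v 1⁆ = -((X - 1 : k[X]) • v 2)
  lie_one_two : ⁅v 1, v 2⁆ = -v 0
  lie_two_zero : ⁅v 2, v 0⁆ = (X : k[X]) • v 1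

section Ideal

variable {k O : Type*} [CommRing k] [LieRing O] [LieAlgebra k O] [Module k[X] O]
  [IsScalarTower k k[X] O] (v : Fin 3 → O) (I : LieIdeal k O)

def firstCoeffs : Submodule k k[X] where
  carrier := {p | ∃ b c : k[X], comb v p b c ∈ I}
  zero_mem' := ⟨0, 0, by simp⟩
  add_mem' := by
    rintro p q ⟨b, c, hp⟩ ⟨b', c', hq⟩
    exact ⟨b + b', c + c', comb_add v p b c q b' c' ▸ I.add_mem hp hq⟩
  smul_mem' := by
    rintro r p ⟨b, c, hp⟩
    exact ⟨r • b, r • c, smul_comb v r p b c ▸ I.smul_mem r hp⟩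

end Ideal

namespace Relations

variable {k O : Type*} [CommRing k] [LieRing O] [Module k[X] O] {v : Fin 3 → O}

theorem lie_comb_one (hv : Relations k v) (a b c : k[X]) :
    ⁅comb v a b c, v 1⁆ = comb v c 0 (-(a * (X - 1))) := by
  rw [comb, add_lie, add_lie, hv.lie_smul, hv.lie_smul, hv.lie_smul, hv.lie_zero_one, lie_self,
    ← lie_skew, hv.lie_one_two, comb]
  module

theorem lie_comb_two (hv : Relations k v) (a b c : k[X]) :
    ⁅comb v a b c, v 2⁆ = comb v (-b) (-(a * X)) 0 := by
  rw [comb, add_lie, add_lie, hv.lie_smul, hv.lie_smul, hv.lie_smul, ← lie_skew, hv.lie_two_zero,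
    hv.lie_one_two, lie_self, comb]
  module

variable [LieAlgebra k O] [IsScalarTower k k[X] O] {I : LieIdeal k O}

theorem third_mem_firstCoeffs (hv : Relations k v) {a b c : k[X]} (h : comb v a b c ∈ I) :
    c ∈ firstCoeffs v I := by
  have := lie_mem_left k O I _ (v 1) h
  rw [hv.lie_comb_one] at this
  exact ⟨0, _, this⟩

theorem second_mem_firstCoeffs (hv : Relations k v) {a b c : k[X]} (h : comb v a b c ∈ I) :
    b ∈ firstCoeffs v I := by
  have := lie_mem_left k O I _ (v 2) h
  rw [hv.lie_comb_two] at this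
  simpa using neg_mem (show -b ∈ firstCoeffs v I from ⟨_, 0, this⟩)

theorem X_mul_mem_firstCoeffs (hv : Relations k v) {p : k[X]} (hp : p ∈ firstCoeffs v I) :
    X * p ∈ firstCoeffs v I := by
  obtain ⟨b, c, h⟩ := hp
  have := lie_mem_left k O I _ (v 2) h
  rw [hv.lie_comb_two] at this
  simpa [mul_comm] using neg_mem (hv.second_mem_firstCoeffs this)

theorem X_mul_X_sub_one_mul_smul_mem (hv : Relations k v) {p : k[X]}
    (hp : p ∈ firstCoeffs v I) (i : Fin 3) : (X * (X - 1) * p) • v i ∈ I := by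
  obtain ⟨b, c, h⟩ := hp
  have bracket (j : Fin 3) {x : O} (hx : x ∈ I) : ⁅x, v j⁆ ∈ I := lie_mem_left k O I _ _ hx
  match i with
  | 0 =>
    have e : (X * (X - 1) * p) • v 0 = -⁅⁅⁅⁅comb v p b c, v 2⁆, v 2⁆, v 1⁆, v 1⁆ := by
      simp only [hv.lie_comb_one, hv.lie_comb_two]; rw [comb]; module
    exact e ▸ neg_mem (bracket 1 (bracket 1 (bracket 2 (bracket 2 h))))
  | 1 =>
    have e : (X * (X - 1) * p) • v 1 = ⁅⁅⁅comb v p b c, v 1⁆, v 1⁆, v 2⁆ := by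
      simp only [hv.lie_comb_one, hv.lie_comb_two]; rw [comb]; module
    exact e ▸ bracket 2 (bracket 1 (bracket 1 h))
  | 2 =>
    have e : (X * (X - 1) * p) • v 2 = -⁅⁅⁅comb v p b c, v 2⁆, v 2⁆, v 1⁆ := by
      simp only [hv.lie_comb_one, hv.lie_comb_two]; rw [comb]; module
    exact e ▸ neg_mem (bracket 1 (bracket 2 (bracket 2 h)))

end Relations

end Onsager

theorem stmt_19_general {k : Type*} [Field k]
    {O : Type*} [LieRing O] [LieAlgebra k O]
    [Module (Polynomial k) O] [IsScalarTower k (Polynomial k) O]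
    (v : Fin 3 → O)
    (bas : Module.Basis (Fin 3) (Polynomial k) O) (hbas : ∀ i, bas i = v i)
    (hsmul : ∀ (p : Polynomial k) (x y : O), ⁅p • x, y⁆ = p • ⁅x, y⁆)
    (h01 : ⁅v 0, v 1⁆ = -(((X : Polynomial k) - 1) • v 2))
    (h12 : ⁅v 1, v 2⁆ = -v 0)
    (h20 : ⁅v 2, v 0⁆ = (X : Polynomial k) • v 1)
    (I : LieIdeal k O) :
    let JI : Set (Polynomial k) :=
      {p | ∃ p₁ p₂ : Polynomial k, p • v 0 + p₁ • v 1 + p₂ • v 2 ∈ I}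
    -- `J_I` is an ideal of `k[t]`:
    (∃ Jid : Ideal (Polynomial k), (Jid : Set (Polynomial k)) = JI) ∧
    -- `O·J_I·t(t-1) ⊆ I`:
    (∀ p₀ p₁ p₂ : Polynomial k, p₀ ∈ JI → p₁ ∈ JI → p₂ ∈ JI →
      ((X : Polynomial k) * ((X : Polynomial k) - 1)) •
        (p₀ • v 0 + p₁ • v 1 + p₂ • v 2) ∈ I) ∧
    -- `I ⊆ O·J_I`:
    (∀ x : O, x ∈ I → ∃ p₀ p₁ p₂ : Polynomial k,
      p₀ ∈ JI ∧ p₁ ∈ JI ∧ p₂ ∈ JI ∧ x = p₀ • v 0 + p₁ • v 1 + p₂ • v 2) := by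
  intro JI
  have hv : Onsager.Relations k v := ⟨hsmul, h01, h12, h20⟩
  refine ⟨⟨{ (Onsager.firstCoeffs v I).toAddSubmonoid with
      smul_mem' := fun f _ hp => mul_mem_of_X_mul_mem (fun _ => hv.X_mul_mem_firstCoeffs) f hp },
    rfl⟩, ?_, ?_⟩
  · intro p₀ p₁ p₂ h₀ h₁ h₂
    change _ • Onsager.comb v p₀ p₁ p₂ ∈ I
    rw [Onsager.smul_comb, Onsager.comb]
    exact add_mem (add_mem (hv.X_mul_X_sub_one_mul_smul_mem h₀ 0)
      (hv.X_mul_X_sub_one_mul_smul_mem h₁ 1)) (hv.X_mul_X_sub_one_mul_smul_mem h₂ 2)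
  · intro x hx
    have hrepr := Onsager.comb_repr v bas hbas x
    rw [← hrepr] at hx
    exact ⟨_, _, _, ⟨_, _, hx⟩, hv.second_mem_firstCoeffs hx, hv.third_mem_firstCoeffs hx,
      hrepr.symm⟩

/-- Let `O = v₀k[t] ⊕ v₁k[t] ⊕ v₂k[t]` be the realization of the Onsager algebra as the
free `k[t]`-module on `v₀, v₁, v₂` with `k[t]`-bilinear brackets `[v₀,v₁] = -v₂(t-1)`,
`[v₁,v₂] = -v₀`, `[v₂,v₀] = v₁t`, let `I` be an ideal of `O` and
`J_I = {p ∈ k[t] : ∃ p₁ p₂, v₀p + v₁p₁ + v₂p₂ ∈ I}`.  Then `J_I` is an ideal of `k[t]`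
and `O·J_I·t(t-1) ⊆ I ⊆ O·J_I`. -/
theorem stmt_19 {k : Type*} [Field k] [CharZero k]
    {O : Type*} [LieRing O] [LieAlgebra k O]
    [Module (Polynomial k) O] [IsScalarTower k (Polynomial k) O]
    (v : Fin 3 → O)
    (bas : Module.Basis (Fin 3) (Polynomial k) O) (hbas : ∀ i, bas i = v i)
    (hsmul : ∀ (p : Polynomial k) (x y : O), ⁅p • x, y⁆ = p • ⁅x, y⁆)
    (h01 : ⁅v 0, v 1⁆ = -(((X : Polynomial k) - 1) • v 2))
    (h12 : ⁅v 1, v 2⁆ = -v 0)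
    (h20 : ⁅v 2, v 0⁆ = (X : Polynomial k) • v 1)
    (I : LieIdeal k O) :
    let JI : Set (Polynomial k) :=
      {p | ∃ p₁ p₂ : Polynomial k, p • v 0 + p₁ • v 1 + p₂ • v 2 ∈ I}
    -- `J_I` is an ideal of `k[t]`:
    (∃ Jid : Ideal (Polynomial k), (Jid : Set (Polynomial k)) = JI) ∧
    -- `O·J_I·t(t-1) ⊆ I`:
    (∀ p₀ p₁ p₂ : Polynomial k, p₀ ∈ JI → p₁ ∈ JI → p₂ ∈ JI →
      ((X : Polynomial k) * ((X : Polynomial k) - 1)) •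
        (p₀ • v 0 + p₁ • v 1 + p₂ • v 2) ∈ I) ∧
    -- `I ⊆ O·J_I`:
    (∀ x : O, x ∈ I → ∃ p₀ p₁ p₂ : Polynomial k,
      p₀ ∈ JI ∧ p₁ ∈ JI ∧ p₂ ∈ JI ∧ x = p₀ • v 0 + p₁ • v 1 + p₂ • v 2) :=
  stmt_19_general v bas hbas hsmul h01 h12 h20 I
end
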